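/- arXiv:1412.5498 — 10 statements merged into one kernel-verified Lean document; each statement's English description precedes it below -/
import Mathlib

section
/- Let 𝒫 be a partition of W, let P ∈ 𝒫, and let 𝒫' be the partition of W obtained from 𝒫 by replacing the part P with the singletons {v} for v ∈ P. Then for every part P' ∈ 𝒫 with P' ≠ P one has mcites_{𝒫'}(P') ≥ mcites_𝒫(P'); that is, splitting a merged article into its atomic articles never decreases the mcites-citation count of any other part. -/
open Finset

variable {V : Type*} [Fintype V] [DecidableEq V]

/-- The set of articles citing at least one article of `P` (the in-neighborhood `N⁻(P)`). -/
def citers (A : Finset (V × V)) (P : Finset V) : Finset V :=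
  Finset.univ.filter fun u => ∃ v ∈ P, (u, v) ∈ A

/-- The number of citations (in-degree) of an article `v`. -/
def indeg (A : Finset (V × V)) (v : V) : ℕ :=
  (Finset.univ.filter fun u => (u, v) ∈ A).card

/-- scites(P) = Σ_{v ∈ P} indeg(v). -/
def scites (A : Finset (V × V)) (P : Finset V) : ℕ :=
  ∑ v ∈ P, indeg A v

/-- ucites(P) = |N⁻(P)|. -/
def ucites (A : Finset (V × V)) (P : Finset V) : ℕ :=
  (citers A P).card

/-- mcites_𝒬(P) = |N⁻(P) ∖ W| + |{P' ∈ 𝒬 ∖ {P} : N⁻(P) ∩ P' ≠ ∅}|. -/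
def mcites (A : Finset (V × V)) (W : Finset V) (𝒬 : Finset (Finset V))
    (P : Finset V) : ℕ :=
  (citers A P \ W).card +
    ((𝒬.erase P).filter fun P' => (citers A P ∩ P').Nonempty).card

/-- `𝒬` is a partition of `W` into nonempty parts. -/
def IsPartition (W : Finset V) (𝒬 : Finset (Finset V)) : Prop :=
  (∀ P ∈ 𝒬, P.Nonempty) ∧ (∀ P ∈ 𝒬, P ⊆ W) ∧ ∀ v ∈ W, ∃! P, P ∈ 𝒬 ∧ v ∈ P

/-- The H-index of a partition `𝒬` w.r.t. a measure `μ`: the largest `h` such that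
at least `h` parts `P ∈ 𝒬` satisfy `μ P ≥ h`. -/
def hindex (𝒬 : Finset (Finset V)) (μ : Finset V → ℕ) : ℕ :=
  Nat.findGreatest (fun h => h ≤ (𝒬.filter fun P => h ≤ μ P).card) 𝒬.card

/-- splitting a merged article `P` into its atomic articles never decreases
the `mcites`-citation count of any other part. -/
theorem stmt5 (A : Finset (V × V)) (W : Finset V) (𝒬 : Finset (Finset V))
    (hP : IsPartition W 𝒬) (P : Finset V) (hPm : P ∈ 𝒬)
    (𝒬' : Finset (Finset V))
    (h𝒬' : 𝒬' = 𝒬.erase P ∪ P.image (fun v => ({v} : Finset V)))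
    (P' : Finset V) (hP'm : P' ∈ 𝒬) (hne : P' ≠ P) :
    mcites A W 𝒬 P' ≤ mcites A W 𝒬' P' := by
  have huniq : ∀ Q1 ∈ 𝒬, ∀ Q2 ∈ 𝒬, ∀ v, v ∈ Q1 → v ∈ Q2 → Q1 = Q2 := by
    intro Q1 h1 Q2 h2 v hv1 hv2
    obtain ⟨Q, _, hQu⟩ := hP.2.2 v (hP.2.1 Q1 h1 hv1)
    rw [hQu Q1 ⟨h1, hv1⟩, hQu Q2 ⟨h2, hv2⟩]
  unfold mcites
  apply Nat.add_le_add_left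
  set pred := fun Q => (citers A P' ∩ Q).Nonempty with hpred
  set S1 := (𝒬.erase P').filter pred with hS1
  set S2 := (𝒬'.erase P').filter pred with hS2
  have hsub : ∀ Q ∈ S1, Q ≠ P → Q ∈ S2 := by
    intro Q hQ hQP
    simp only [hS1, hS2, mem_filter, mem_erase] at hQ ⊢
    exact ⟨⟨hQ.1.1, by rw [h𝒬']; exact mem_union_left _ (mem_erase.2 ⟨hQP, hQ.1.2⟩)⟩, hQ.2⟩
  by_cases hPS : P ∈ S1
  · have hpredP : pred P := (mem_filter.1 hPS).2
    obtain ⟨v, hv⟩ := hpredP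
    have hvP : v ∈ P := (mem_inter.1 hv).2
    have hvC : v ∈ citers A P' := (mem_inter.1 hv).1
    have hsing : ({v} : Finset V) ∈ S2 := by
      simp only [hS2, mem_filter, mem_erase]
      refine ⟨⟨?_, ?_⟩, ⟨v, mem_inter.2 ⟨hvC, mem_singleton_self v⟩⟩⟩
      · intro h
        exact hne (huniq P' hP'm P hPm v (h ▸ mem_singleton_self v) hvP)
      · rw [h𝒬']; exact mem_union_right _ (mem_image.2 ⟨v, hvP, rfl⟩)
    have hsingn : ({v} : Finset V) ∉ S1.erase P := by
      intro h
      have hm := mem_erase.1 h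
      have hQ := (mem_filter.1 hm.2).1
      exact hm.1 ((huniq P hPm _ (mem_erase.1 hQ).2 v hvP (mem_singleton_self v)).symm)
    have : insert ({v} : Finset V) (S1.erase P) ⊆ S2 := by
      intro Q hQ
      rcases mem_insert.1 hQ with h | h
      · exact h ▸ hsing
      · exact hsub Q (mem_erase.1 h).2 (mem_erase.1 h).1
    calc S1.card = (S1.erase P).card + 1 := (card_erase_add_one hPS).symm
      _ = (insert ({v} : Finset V) (S1.erase P)).card := (card_insert_of_notMem hsingn).symm
      _ ≤ S2.card := card_le_card this
  · exact card_le_card (fun Q hQ => hsub Q hQ (fun h => hPS (h ▸ hQ)))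
end

section
/- Let G be a compatibility graph, let μ ∈ {scites, ucites}, let h ≥ 1, and for every finite set V' ⊆ W define f(V') as the maximum, over all partitions of V' that comply with G, of the number of parts P with μ(P) ≥ h (with f(∅) = 0). Then for every nonempty V' ⊆ W the recurrence f(V') = max { f(V' ∖ V'') + q(V'') : ∅ ≠ V'' ⊆ V'' and V'' induces a clique in G } holds, where q(V'') = 1 if μ(V'') ≥ h and q(V'') = 0 otherwise. -/
open Finset

variable {V : Type*} [Fintype V] [DecidableEq V]

/-- A partition complies with the compatibility graph `G` if each part induces a clique. -/
def Complies (G : SimpleGraph V) (𝒬 : Finset (Finset V)) : Prop :=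
  ∀ P ∈ 𝒬, ∀ a ∈ P, ∀ b ∈ P, a ≠ b → G.Adj a b

/-- `f(V')`: the maximum, over all partitions `𝒬` of `V'` complying with `G`, of the
number of parts `P ∈ 𝒬` with `μ P ≥ h` (`f ∅ = 0`). -/
noncomputable def maxParts (G : SimpleGraph V) (μ : Finset V → ℕ) (h : ℕ)
    (W' : Finset V) : ℕ :=
  sSup {n | ∃ 𝒬 : Finset (Finset V), IsPartition W' 𝒬 ∧ Complies G 𝒬 ∧
    n = (𝒬.filter fun P => h ≤ μ P).card}

lemma mp_nonempty (G : SimpleGraph V) (μ : Finset V → ℕ) (h : ℕ) (W' : Finset V) :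
    {n | ∃ 𝒬 : Finset (Finset V), IsPartition W' 𝒬 ∧ Complies G 𝒬 ∧
      n = (𝒬.filter fun P => h ≤ μ P).card}.Nonempty := by
  classical
  refine ⟨_, W'.image (fun v => ({v} : Finset V)), ⟨?_, ?_, ?_⟩, ?_, rfl⟩
  · intro P hP
    obtain ⟨v, _, rfl⟩ := mem_image.mp hP
    exact ⟨v, mem_singleton_self v⟩
  · intro P hP
    obtain ⟨v, hv, rfl⟩ := mem_image.mp hP
    intro x hx; rw [mem_singleton] at hx; subst hx; exact hv
  · intro v hv
    refine ⟨{v}, ⟨mem_image_of_mem _ hv, mem_singleton_self v⟩, ?_⟩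
    rintro P ⟨hP, hvP⟩
    obtain ⟨w, _, rfl⟩ := mem_image.mp hP
    rw [mem_singleton] at hvP; subst hvP; rfl
  · intro P hP a ha b hb hab
    obtain ⟨v, _, rfl⟩ := mem_image.mp hP
    rw [mem_singleton] at ha hb
    exact absurd (ha.trans hb.symm) hab

lemma mp_bdd (G : SimpleGraph V) (μ : Finset V → ℕ) (h : ℕ) (W' : Finset V) :
    BddAbove {n | ∃ 𝒬 : Finset (Finset V), IsPartition W' 𝒬 ∧ Complies G 𝒬 ∧
      n = (𝒬.filter fun P => h ≤ μ P).card} := by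
  refine ⟨Fintype.card (Finset V), ?_⟩
  rintro n ⟨𝒬, -, -, rfl⟩
  exact le_trans (card_filter_le _ _) (card_le_univ 𝒬)

lemma mp_le (G : SimpleGraph V) (μ : Finset V → ℕ) (h : ℕ) (W' : Finset V) :
    maxParts G μ h W' ≤ Fintype.card (Finset V) := by
  refine csSup_le (mp_nonempty G μ h W') ?_
  rintro n ⟨𝒬, -, -, rfl⟩
  exact le_trans (card_filter_le _ _) (card_le_univ 𝒬)

/-- the recurrence
`f(V') = max { f(V' ∖ V'') + q(V'') : ∅ ≠ V'' ⊆ V', V''` induces a clique in `G }`,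
where `q(V'') = 1` if `μ(V'') ≥ h` and `q(V'') = 0` otherwise. -/
theorem stmt8 (A : Finset (V × V)) (W : Finset V) (G : SimpleGraph V)
    (μ : Finset V → ℕ) (hμ : μ = scites A ∨ μ = ucites A) (h : ℕ) (hh : 1 ≤ h)
    (V' : Finset V) (hV'W : V' ⊆ W) (hV' : V'.Nonempty) :
    maxParts G μ h V' =
      sSup {n | ∃ V'' : Finset V, V''.Nonempty ∧ V'' ⊆ V' ∧
        (∀ a ∈ V'', ∀ b ∈ V'', a ≠ b → G.Adj a b) ∧
        n = maxParts G μ h (V' \ V'') + (if h ≤ μ V'' then 1 else 0)} := by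
  classical
  have rhsBdd : BddAbove {n | ∃ V'' : Finset V, V''.Nonempty ∧ V'' ⊆ V' ∧
      (∀ a ∈ V'', ∀ b ∈ V'', a ≠ b → G.Adj a b) ∧
      n = maxParts G μ h (V' \ V'') + (if h ≤ μ V'' then 1 else 0)} := by
    refine ⟨Fintype.card (Finset V) + 1, ?_⟩
    rintro n ⟨V'', -, -, -, rfl⟩
    refine add_le_add (mp_le G μ h _) ?_
    split_ifs <;> omega
  apply le_antisymm
  · -- LHS ≤ RHS
    apply csSup_le (mp_nonempty G μ h V')
    rintro n ⟨𝒬, ⟨hne, hsub, huniq⟩, hcomp, rfl⟩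
    obtain ⟨v, hv⟩ := hV'
    obtain ⟨P, ⟨hP𝒬, hvP⟩, -⟩ := huniq v hv
    have hpart' : IsPartition (V' \ P) (𝒬.erase P) := by
      refine ⟨fun Q hQ => hne Q (mem_of_mem_erase hQ), ?_, ?_⟩
      · intro Q hQ x hx
        have hQ𝒬 := mem_of_mem_erase hQ
        have hxV' := hsub Q hQ𝒬 hx
        rw [mem_sdiff]
        refine ⟨hxV', fun hxP => ?_⟩
        obtain ⟨R, -, hRuniq⟩ := huniq x hxV'
        exact (ne_of_mem_erase hQ)
          ((hRuniq Q ⟨hQ𝒬, hx⟩).trans (hRuniq P ⟨hP𝒬, hxP⟩).symm)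
      · intro x hx
        rw [mem_sdiff] at hx
        obtain ⟨Q, ⟨hQ, hxQ⟩, hQu⟩ := huniq x hx.1
        have hQP : Q ≠ P := fun hQP => hx.2 (hQP ▸ hxQ)
        refine ⟨Q, ⟨mem_erase.mpr ⟨hQP, hQ⟩, hxQ⟩, ?_⟩
        rintro R ⟨hR, hxR⟩
        exact hQu R ⟨mem_of_mem_erase hR, hxR⟩
    have hcomp' : Complies G (𝒬.erase P) :=
      fun Q hQ => hcomp Q (mem_of_mem_erase hQ)
    have hle : ((𝒬.erase P).filter fun P' => h ≤ μ P').card ≤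
        maxParts G μ h (V' \ P) :=
      le_csSup (mp_bdd G μ h (V' \ P)) ⟨𝒬.erase P, hpart', hcomp', rfl⟩
    have hcount : (𝒬.filter fun P' => h ≤ μ P').card =
        ((𝒬.erase P).filter fun P' => h ≤ μ P').card + (if h ≤ μ P then 1 else 0) := by
      conv_lhs => rw [← insert_erase hP𝒬]
      rw [filter_insert]
      split_ifs
      · rw [card_insert_of_notMem
          (fun hmem => (notMem_erase P 𝒬) (mem_filter.mp hmem).1)]
      · rfl
    have hmemrhs : maxParts G μ h (V' \ P) + (if h ≤ μ P then 1 else 0) ∈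
        {n | ∃ V'' : Finset V, V''.Nonempty ∧ V'' ⊆ V' ∧
          (∀ a ∈ V'', ∀ b ∈ V'', a ≠ b → G.Adj a b) ∧
          n = maxParts G μ h (V' \ V'') + (if h ≤ μ V'' then 1 else 0)} :=
      ⟨P, hne P hP𝒬, hsub P hP𝒬, hcomp P hP𝒬, rfl⟩
    calc (𝒬.filter fun P' => h ≤ μ P').card
        ≤ maxParts G μ h (V' \ P) + (if h ≤ μ P then 1 else 0) := by
          rw [hcount]; exact add_le_add_left hle _
      _ ≤ _ := le_csSup rhsBdd hmemrhs
  · -- RHS ≤ LHS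
    obtain ⟨v, hv⟩ := hV'
    have rhsNe : Set.Nonempty {n | ∃ V'' : Finset V, V''.Nonempty ∧ V'' ⊆ V' ∧
        (∀ a ∈ V'', ∀ b ∈ V'', a ≠ b → G.Adj a b) ∧
        n = maxParts G μ h (V' \ V'') + (if h ≤ μ V'' then 1 else 0)} := by
      refine ⟨_, {v}, singleton_nonempty v, singleton_subset_iff.mpr hv, ?_, rfl⟩
      intro a ha b hb hab
      rw [mem_singleton] at ha hb
      exact absurd (ha.trans hb.symm) hab
    apply csSup_le rhsNe
    rintro n ⟨V'', hne'', hsub'', hclique, rfl⟩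
    obtain ⟨𝒬', ⟨hne', hsub', huniq'⟩, hcomp', hval⟩ :=
      Nat.sSup_mem (mp_nonempty G μ h (V' \ V'')) (mp_bdd G μ h (V' \ V''))
    have hV''notin : V'' ∉ 𝒬' := by
      intro hmem'
      obtain ⟨x, hx⟩ := hne''
      exact (mem_sdiff.mp (hsub' V'' hmem' hx)).2 hx
    have hpart : IsPartition V' (insert V'' 𝒬') := by
      refine ⟨?_, ?_, ?_⟩
      · intro Q hQ
        rcases mem_insert.mp hQ with rfl | hQ'
        · exact hne''
        · exact hne' Q hQ'
      · intro Q hQ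
        rcases mem_insert.mp hQ with rfl | hQ'
        · exact hsub''
        · exact (hsub' Q hQ').trans sdiff_subset
      · intro x hx
        by_cases hxV'' : x ∈ V''
        · refine ⟨V'', ⟨mem_insert_self _ _, hxV''⟩, ?_⟩
          rintro Q ⟨hQ, hxQ⟩
          rcases mem_insert.mp hQ with rfl | hQ'
          · rfl
          · exact absurd hxV'' (mem_sdiff.mp (hsub' Q hQ' hxQ)).2
        · obtain ⟨Q, ⟨hQ, hxQ⟩, hQu⟩ := huniq' x (mem_sdiff.mpr ⟨hx, hxV''⟩)
          refine ⟨Q, ⟨mem_insert_of_mem hQ, hxQ⟩, ?_⟩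
          rintro R ⟨hR, hxR⟩
          rcases mem_insert.mp hR with rfl | hR'
          · exact absurd hxR hxV''
          · exact hQu R ⟨hR', hxR⟩
    have hcomp : Complies G (insert V'' 𝒬') := by
      intro Q hQ
      rcases mem_insert.mp hQ with rfl | hQ'
      · exact hclique
      · exact hcomp' Q hQ'
    have hcount : ((insert V'' 𝒬').filter fun P' => h ≤ μ P').card =
        (𝒬'.filter fun P' => h ≤ μ P').card + (if h ≤ μ V'' then 1 else 0) := by
      rw [filter_insert]
      split_ifs
      · rw [card_insert_of_notMem (fun hmem => hV''notin (mem_filter.mp hmem).1)]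
      · rfl
    have : maxParts G μ h (V' \ V'') + (if h ≤ μ V'' then 1 else 0) =
        ((insert V'' 𝒬').filter fun P' => h ≤ μ P').card := by
      rw [hcount]; exact congrArg (fun m => m + if h ≤ μ V'' then 1 else 0) hval
    rw [this]
    exact le_csSup (mp_bdd G μ h V') ⟨insert V'' 𝒬', hpart, hcomp, rfl⟩
end

section
/- Let h ≥ 1 and suppose the citation graph D contains h² arcs that are pairwise vertex-disjoint (no two of these arcs share an endpoint) and whose heads all lie in W. Then the partition of W obtained by grouping these h² heads into h parts of exactly h heads each and leaving every other article of W as a singleton has H-index at least h with respect to each of the measures scites, ucites, and mcites. -/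
open Finset

variable {V : Type*} [Fintype V] [DecidableEq V]

/-- if `D` contains `h²` pairwise vertex-disjoint arcs whose heads lie in
`W`, then grouping these `h²` heads into `h` parts of `h` heads each and leaving all
other articles of `W` as singletons yields a partition with H-index at least `h` w.r.t.
each of `scites`, `ucites` and `mcites`. -/
theorem stmt9 (A : Finset (V × V)) (W : Finset V) (h : ℕ) (hh : 1 ≤ h)
    (M : Finset (V × V)) (hMA : M ⊆ A) (hMcard : M.card = h ^ 2)
    (hheads : ∀ a ∈ M, a.2 ∈ W)
    (hproper : ∀ a ∈ M, a.1 ≠ a.2)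
    (hdisj : ∀ a ∈ M, ∀ b ∈ M, a ≠ b →
      a.1 ≠ b.1 ∧ a.1 ≠ b.2 ∧ a.2 ≠ b.1 ∧ a.2 ≠ b.2)
    (𝒬 : Finset (Finset V)) (hP : IsPartition W 𝒬)
    (hshape : ∀ P ∈ 𝒬, (P ⊆ M.image Prod.snd ∧ P.card = h) ∨
      (∃ v ∈ W, v ∉ M.image Prod.snd ∧ P = {v})) :
    h ≤ hindex 𝒬 (scites A) ∧ h ≤ hindex 𝒬 (ucites A) ∧
      h ≤ hindex 𝒬 (mcites A W 𝒬) := by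
  classical
  obtain ⟨hnonempty, hsub, huniq⟩ := hP
  set H : Finset V := M.image Prod.snd with hH
  have hsnd_inj : Set.InjOn Prod.snd (M : Set (V × V)) := by
    intro a ha b hb hab
    by_contra hne'
    exact (hdisj a ha b hb hne').2.2.2 hab
  have hfst_inj : Set.InjOn Prod.fst (M : Set (V × V)) := by
    intro a ha b hb hab
    by_contra hne'
    exact (hdisj a ha b hb hne').1 hab
  have tails_ne_heads : ∀ a ∈ M, ∀ b ∈ M, a.1 ≠ b.2 := by
    intro a ha b hb
    by_cases hab : a = b
    · subst hab; exact hproper a ha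
    · exact (hdisj a ha b hb hab).2.1
  have hHcard : H.card = h ^ 2 := by
    rw [hH, Finset.card_image_of_injOn hsnd_inj, hMcard]
  have hdisjparts : ∀ P ∈ 𝒬, ∀ P' ∈ 𝒬, P ≠ P' → Disjoint P P' := by
    intro P hP1 P' hP2 hPP
    rw [Finset.disjoint_left]
    intro v hv hv'
    obtain ⟨Q, hQ, hQu⟩ := huniq v (hsub P hP1 hv)
    exact hPP ((hQu P ⟨hP1, hv⟩).trans (hQu P' ⟨hP2, hv'⟩).symm)
  set Big : Finset (Finset V) := 𝒬.filter (fun P => P ⊆ H ∧ P.card = h) with hBig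
  have hBigsub : Big ⊆ 𝒬 := Finset.filter_subset _ _
  have hBigUnion : Big.biUnion id = H := by
    apply Finset.Subset.antisymm
    · intro v hv
      simp only [Finset.mem_biUnion, id] at hv
      obtain ⟨P, hP1, hvP⟩ := hv
      exact ((Finset.mem_filter.mp hP1).2).1 hvP
    · intro v hv
      have hvW : v ∈ W := by
        obtain ⟨a, ha, rfl⟩ := Finset.mem_image.mp hv
        exact hheads a ha
      obtain ⟨P, ⟨hP1, hvP⟩, -⟩ := huniq v hvW
      have hPB : P ∈ Big := by
        rcases hshape P hP1 with h1 | ⟨w, hwW, hwH, rfl⟩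
        · exact Finset.mem_filter.mpr ⟨hP1, h1⟩
        · simp only [Finset.mem_singleton] at hvP
          rw [hvP] at hv
          exact absurd hv hwH
      exact Finset.mem_biUnion.mpr ⟨P, hPB, hvP⟩
  have hBigcard : Big.card = h := by
    have hdue : (Big.biUnion id).card = ∑ P ∈ Big, P.card :=
      Finset.card_biUnion (fun P hp Q hq hpq =>
        hdisjparts P (hBigsub hp) Q (hBigsub hq) hpq)
    have hmul : Big.card * h = h * h := by
      have : ∑ P ∈ Big, P.card = ∑ _P ∈ Big, h :=
        Finset.sum_congr rfl (fun P hp => (Finset.mem_filter.mp hp).2.2)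
      have h2 : (Big.biUnion id).card = Big.card * h := by
        rw [hdue, this, Finset.sum_const, smul_eq_mul]
      rw [← h2, hBigUnion, hHcard, sq]
    exact Nat.eq_of_mul_eq_mul_right hh hmul
  have key : ∀ μ : Finset V → ℕ, (∀ P ∈ Big, h ≤ μ P) → h ≤ hindex 𝒬 μ := by
    intro μ hμ
    apply Nat.le_findGreatest
    · calc h = Big.card := hBigcard.symm
        _ ≤ 𝒬.card := Finset.card_le_card hBigsub
    · calc h = Big.card := hBigcard.symm
        _ ≤ _ := Finset.card_le_card
            (fun P hp => Finset.mem_filter.mpr ⟨hBigsub hp, hμ P hp⟩)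
  -- facts about a big part
  have hMPfacts : ∀ P ∈ Big, (M.filter fun a => a.2 ∈ P).card = h ∧
      (M.filter fun a => a.2 ∈ P) ⊆ M := by
    intro P hPB
    obtain ⟨hPQ, hPH, hPc⟩ : P ∈ 𝒬 ∧ P ⊆ H ∧ P.card = h := by
      have := Finset.mem_filter.mp hPB; exact ⟨this.1, this.2.1, this.2.2⟩
    set MP := M.filter fun a => a.2 ∈ P with hMP
    have hMPM : MP ⊆ M := Finset.filter_subset _ _
    have himg : MP.image Prod.snd = P := by
      apply Finset.Subset.antisymm
      · intro v hv
        obtain ⟨a, ha, rfl⟩ := Finset.mem_image.mp hv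
        exact (Finset.mem_filter.mp ha).2
      · intro v hv
        obtain ⟨a, ha, rfl⟩ := Finset.mem_image.mp (hPH hv)
        exact Finset.mem_image.mpr ⟨a, Finset.mem_filter.mpr ⟨ha, hv⟩, rfl⟩
    refine ⟨?_, hMPM⟩
    rw [← hPc, ← himg]
    exact (Finset.card_image_of_injOn
      (hsnd_inj.mono (Finset.coe_subset.mpr hMPM))).symm
  refine ⟨key _ ?_, key _ ?_, key _ ?_⟩
  · -- scites
    intro P hPB
    have hPc : P.card = h := (Finset.mem_filter.mp hPB).2.2
    have hPH : P ⊆ H := (Finset.mem_filter.mp hPB).2.1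
    calc h = ∑ _v ∈ P, 1 := by rw [Finset.sum_const, smul_eq_mul, mul_one, hPc]
      _ ≤ ∑ v ∈ P, indeg A v := by
          apply Finset.sum_le_sum
          intro v hv
          obtain ⟨a, ha, rfl⟩ := Finset.mem_image.mp (hPH hv)
          exact Finset.card_pos.mpr
            ⟨a.1, Finset.mem_filter.mpr ⟨Finset.mem_univ _, hMA ha⟩⟩
  · -- ucites
    intro P hPB
    obtain ⟨hMPcard, hMPM⟩ := hMPfacts P hPB
    set MP := M.filter fun a => a.2 ∈ P with hMP
    have hsubc : MP.image Prod.fst ⊆ citers A P := by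
      intro u hu
      obtain ⟨a, ha, rfl⟩ := Finset.mem_image.mp hu
      have haM := Finset.mem_filter.mp ha
      exact Finset.mem_filter.mpr
        ⟨Finset.mem_univ _, ⟨a.2, haM.2, hMA haM.1⟩⟩
    calc h = MP.card := hMPcard.symm
      _ = (MP.image Prod.fst).card :=
          (Finset.card_image_of_injOn (hfst_inj.mono (Finset.coe_subset.mpr hMPM))).symm
      _ ≤ (citers A P).card := Finset.card_le_card hsubc
  · -- mcites
    intro P hPB
    have hPH : P ⊆ H := (Finset.mem_filter.mp hPB).2.1
    obtain ⟨hMPcard, hMPM⟩ := hMPfacts P hPB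
    set MP := M.filter fun a => a.2 ∈ P with hMP
    set MP1 := MP.filter (fun a => a.1 ∉ W) with hMP1
    set MP2 := MP.filter (fun a => a.1 ∈ W) with hMP2
    have hsplit : MP2.card + MP1.card = MP.card :=
      Finset.card_filter_add_card_filter_not _
    have hciter : ∀ a ∈ MP, a.1 ∈ citers A P := by
      intro a ha
      have haM := Finset.mem_filter.mp ha
      exact Finset.mem_filter.mpr
        ⟨Finset.mem_univ _, ⟨a.2, haM.2, hMA haM.1⟩⟩
    -- bound 1
    have hb1 : MP1.card ≤ (citers A P \ W).card := by
      have hsubc : MP1.image Prod.fst ⊆ citers A P \ W := by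
        intro u hu
        obtain ⟨a, ha, rfl⟩ := Finset.mem_image.mp hu
        have ha' := Finset.mem_filter.mp ha
        exact Finset.mem_sdiff.mpr ⟨hciter a ha'.1, ha'.2⟩
      calc MP1.card = (MP1.image Prod.fst).card :=
            (Finset.card_image_of_injOn (hfst_inj.mono
              (Finset.coe_subset.mpr ((Finset.filter_subset _ _).trans hMPM)))).symm
        _ ≤ _ := Finset.card_le_card hsubc
    -- tails are not heads
    have htailH : ∀ a ∈ M, a.1 ∉ H := by
      intro a ha hmem
      obtain ⟨b, hb, hba⟩ := Finset.mem_image.mp hmem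
      exact tails_ne_heads a ha b hb hba.symm
    -- bound 2
    have hb2 : MP2.card ≤
        ((𝒬.erase P).filter fun P' => (citers A P ∩ P').Nonempty).card := by
      have hsubc : MP2.image (fun a => ({a.1} : Finset V)) ⊆
          (𝒬.erase P).filter fun P' => (citers A P ∩ P').Nonempty := by
        intro S hS
        obtain ⟨a, ha, rfl⟩ := Finset.mem_image.mp hS
        have ha' := Finset.mem_filter.mp ha
        have haM : a ∈ M := hMPM ha'.1
        have haW : a.1 ∈ W := ha'.2
        have haH : a.1 ∉ H := htailH a haM
        obtain ⟨P', ⟨hP'Q, haP'⟩, -⟩ := huniq a.1 haW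
        have hP'eq : P' = {a.1} := by
          rcases hshape P' hP'Q with h1 | ⟨w, hwW, hwH, rfl⟩
          · exact absurd (h1.1 haP') haH
          · simp only [Finset.mem_singleton] at haP'
            rw [haP']
        have hsingQ : ({a.1} : Finset V) ∈ 𝒬 := hP'eq ▸ hP'Q
        have hne : ({a.1} : Finset V) ≠ P := by
          intro heq
          have : a.1 ∈ P := heq ▸ Finset.mem_singleton_self a.1
          exact haH (hPH this)
        refine Finset.mem_filter.mpr ⟨Finset.mem_erase.mpr ⟨hne, hsingQ⟩, ?_⟩
        exact ⟨a.1, Finset.mem_inter.mpr ⟨hciter a ha'.1, Finset.mem_singleton_self _⟩⟩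
      have hinj : Set.InjOn (fun a : V × V => ({a.1} : Finset V)) (MP2 : Set (V × V)) := by
        intro a ha b hb hab
        have h1 : a.1 = b.1 := Finset.singleton_injective hab
        exact hfst_inj (Finset.coe_subset.mpr ((Finset.filter_subset _ _).trans hMPM) ha)
          (Finset.coe_subset.mpr ((Finset.filter_subset _ _).trans hMPM) hb) h1
      calc MP2.card = (MP2.image (fun a => ({a.1} : Finset V))).card :=
            (Finset.card_image_of_injOn hinj).symm
        _ ≤ _ := Finset.card_le_card hsubc
    unfold mcites
    omega
end

section
/- Let μ ∈ {scites, ucites, mcites}, let h ≥ 0, and let X ⊆ W be a set of articles such that no article of X cites any other article of X. If there exists a partition of W with H-index at least h with respect to μ, then there exists a partition 𝒫 of W with H-index at least h with respect to μ such that at most h² articles of X lie in non-singleton parts of 𝒫. -/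
open Finset

variable {V : Type*} [Fintype V] [DecidableEq V]

lemma cUnion {T : Type*} [DecidableEq T] (c : Finset V → Finset T)
    (hc : ∀ S x, c (insert x S) = c S ∪ c {x}) (S Y : Finset V) :
    c (S ∪ Y) = c S ∪ Y.biUnion fun x => c {x} := by
  classical
  induction Y using Finset.induction_on with
  | empty => simp
  | @insert a s ha ih =>
    rw [Finset.union_insert, hc, ih, Finset.biUnion_insert, union_assoc,
      union_comm (c {a})]

lemma greedy {T : Type*} [DecidableEq T] (c : Finset V → Finset T)
    (hc : ∀ S x, c (insert x S) = c S ∪ c {x}) :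
    ∀ (h : ℕ) (B Y : Finset V), ∃ Y' ⊆ Y, Y'.card ≤ h ∧
      min (h + (c B).card) (c (B ∪ Y)).card ≤ (c (B ∪ Y')).card := by
  intro h
  induction h with
  | zero =>
    intro B Y
    exact ⟨∅, empty_subset _, le_rfl, by simpa using min_le_left _ ((c (B ∪ Y)).card)⟩
  | succ h ih =>
    intro B Y
    by_cases hx : ∃ x ∈ Y, ¬ c {x} ⊆ c B
    · obtain ⟨x, hxY, hxc⟩ := hx
      obtain ⟨Y'', hY''sub, hY''card, hY''⟩ := ih (insert x B) (Y.erase x)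
      refine ⟨insert x Y'', ?_, ?_, ?_⟩
      · intro y hy
        rcases mem_insert.mp hy with rfl | hy
        · exact hxY
        · exact mem_of_mem_erase (hY''sub hy)
      · exact le_trans (card_insert_le _ _) (by omega)
      · have h1 : insert x B ∪ Y.erase x = B ∪ Y := by
          rw [Finset.insert_union, ← Finset.union_insert, Finset.insert_erase hxY]
        have h2 : B ∪ insert x Y'' = insert x B ∪ Y'' := by rw [Finset.union_insert, Finset.insert_union]
        have h3 : (c B).card < (c (insert x B)).card := by
          apply card_lt_card
          rw [hc]
          constructor
          · exact subset_union_left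
          · intro hsub
            exact hxc fun t ht => hsub (mem_union_right _ ht)
        rw [h1] at hY''
        rw [h2]
        refine le_trans ?_ hY''
        exact min_le_min (by omega) le_rfl
    · push_neg at hx
      have hBY : c (B ∪ Y) = c B := by
        rw [cUnion c hc]
        apply union_eq_left.mpr
        intro t ht
        obtain ⟨x, hxY, hxt⟩ := Finset.mem_biUnion.mp ht
        exact hx x hxY hxt
      exact ⟨∅, empty_subset _, Nat.zero_le _, by simp [hBY]⟩

lemma shrink {T : Type*} [DecidableEq T] (c : Finset V → Finset T)
    (hc : ∀ S x, c (insert x S) = c S ∪ c {x}) (h : ℕ) (hh : 1 ≤ h)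
    (X P : Finset V) (hP : P.Nonempty) (hf : h ≤ (c P).card) :
    ∃ P', P' ⊆ P ∧ P'.Nonempty ∧ (P' ∩ X).card ≤ h ∧ h ≤ (c P').card := by
  classical
  obtain ⟨Y', hY'sub, hY'card, hY'⟩ := greedy c hc h (P \ X) (P ∩ X)
  have hBY : P \ X ∪ P ∩ X = P := by ext y; simp; tauto
  rw [hBY] at hY'
  have hmin : h ≤ (c (P \ X ∪ Y')).card := le_trans (le_min (by omega) hf) hY'
  by_cases hne : (P \ X ∪ Y').Nonempty
  · refine ⟨P \ X ∪ Y', ?_, hne, ?_, hmin⟩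
    · intro y hy
      rcases mem_union.mp hy with hy | hy
      · exact (mem_sdiff.mp hy).1
      · exact (mem_inter.mp (hY'sub hy)).1
    · refine le_trans (card_le_card ?_) hY'card
      intro y hy
      obtain ⟨hy1, hy2⟩ := mem_inter.mp hy
      rcases mem_union.mp hy1 with hy1 | hy1
      · exact absurd hy2 (mem_sdiff.mp hy1).2
      · exact hy1
  · obtain ⟨p, hp⟩ := hP
    rw [not_nonempty_iff_eq_empty] at hne
    refine ⟨{p}, singleton_subset_iff.mpr hp, singleton_nonempty p, ?_, ?_⟩
    · exact le_trans (card_le_card (inter_subset_left)) (by simp [hh])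
    · rw [hne] at hmin
      refine le_trans hmin (card_le_card ?_)
      have : ({p} : Finset V) = insert p ∅ := by simp
      rw [this, hc]
      exact subset_union_left

lemma citers_insert (A : Finset (V × V)) (S : Finset V) (x : V) :
    citers A (insert x S) = citers A S ∪ citers A {x} := by
  ext u; simp only [citers, mem_filter, mem_union, mem_insert, mem_singleton, mem_univ,
    true_and]
  constructor
  · rintro ⟨v, rfl | hv, hA⟩
    · exact Or.inr ⟨v, rfl, hA⟩
    · exact Or.inl ⟨v, hv, hA⟩
  · rintro (⟨v, hv, hA⟩ | ⟨v, rfl, hA⟩)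
    · exact ⟨v, Or.inr hv, hA⟩
    · exact ⟨v, Or.inl rfl, hA⟩

lemma scites_eq_card (A : Finset (V × V)) (S : Finset V) :
    scites A S = (A.filter fun p => p.2 ∈ S).card := by
  classical
  induction S using Finset.induction_on with
  | empty => simp [scites]
  | @insert a s ha ih =>
    rw [scites, Finset.sum_insert ha, ← scites, ih]
    have h1 : (A.filter fun p => p.2 ∈ insert a s) =
        (A.filter fun p => p.2 = a) ∪ (A.filter fun p => p.2 ∈ s) := by
      rw [← Finset.filter_or]
      apply Finset.filter_congr
      intro p _
      simp [mem_insert]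
    rw [h1, Finset.card_union_of_disjoint, indeg]
    · congr 1
      apply Finset.card_bij (fun u _ => (u, a))
      · intro u hu
        rw [mem_filter] at hu ⊢
        exact ⟨hu.2, rfl⟩
      · intro u₁ h₁ u₂ h₂ he
        exact congrArg Prod.fst he
      · rintro ⟨u, b⟩ hp
        rw [mem_filter] at hp
        obtain ⟨hA, hb⟩ := hp
        dsimp at hb
        subst hb
        refine ⟨u, ?_, rfl⟩
        rw [mem_filter]
        exact ⟨mem_univ _, hA⟩
    · rw [Finset.disjoint_filter]
      intro p _ hpa hps
      rw [hpa] at hps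
      exact ha hps

lemma exists_cover (A : Finset (V × V)) (W : Finset V) (𝒬 : Finset (Finset V))
    (hQ : IsPartition W 𝒬) (μ : Finset (Finset V) → Finset V → ℕ)
    (hμ : μ = (fun _ => scites A) ∨ μ = (fun _ => ucites A) ∨ μ = mcites A W) :
    ∃ c : Finset V → Finset V → Finset ((V × V) ⊕ (Finset V)),
      (∀ P S x, c P (insert x S) = c P S ∪ c P {x}) ∧
      (∀ P ∈ 𝒬, μ 𝒬 P ≤ (c P P).card) ∧
      (∀ P ∈ 𝒬, ∀ S' ⊆ P, ∀ 𝒬' : Finset (Finset V), IsPartition W 𝒬' → S' ∈ 𝒬' →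
        (∀ Q ∈ 𝒬', ∃ P₀ ∈ 𝒬, Q ⊆ P₀) → (c P S').card ≤ μ 𝒬' S') := by
  classical
  obtain ⟨hne, hsub, huniq⟩ := hQ
  have hdisj : ∀ P₁ ∈ 𝒬, ∀ P₂ ∈ 𝒬, ∀ v, v ∈ P₁ → v ∈ P₂ → P₁ = P₂ := by
    intro P₁ h1 P₂ h2 v hv1 hv2
    obtain ⟨P, -, hPuniq⟩ := huniq v (hsub P₁ h1 hv1)
    rw [hPuniq P₁ ⟨h1, hv1⟩, hPuniq P₂ ⟨h2, hv2⟩]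
  rcases hμ with rfl | rfl | rfl
  · -- scites
    refine ⟨fun _ S => (A.filter fun p => p.2 ∈ S).image Sum.inl, ?_, ?_, ?_⟩
    · intro P S x
      show (A.filter fun p => p.2 ∈ insert x S).image Sum.inl = _
      rw [← Finset.image_union, ← Finset.filter_or]
      congr 1
      apply Finset.filter_congr
      intro p _
      simp [mem_insert, or_comm]
    · intro P _
      show scites A P ≤ _
      rw [Finset.card_image_of_injective _ Sum.inl_injective, scites_eq_card]
    · intro P _ S' _ 𝒬' _ _ _
      show _ ≤ scites A S'
      rw [Finset.card_image_of_injective _ Sum.inl_injective, scites_eq_card]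
  · -- ucites
    have hinj : Function.Injective fun v : V => (Sum.inl (v, v) : (V × V) ⊕ (Finset V)) := by
      intro a b hab
      simpa using hab
    refine ⟨fun _ S => (citers A S).image fun v => Sum.inl (v, v), ?_, ?_, ?_⟩
    · intro P S x
      show (citers A (insert x S)).image _ = _
      rw [← Finset.image_union, citers_insert]
    · intro P _
      show ucites A P ≤ _
      rw [Finset.card_image_of_injective _ hinj, ucites]
    · intro P _ S' _ 𝒬' _ _ _
      show _ ≤ ucites A S'
      rw [Finset.card_image_of_injective _ hinj, ucites]
  · -- mcites
    have hinj : Function.Injective fun v : V => (Sum.inl (v, v) : (V × V) ⊕ (Finset V)) := by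
      intro a b hab
      simpa using hab
    refine ⟨fun P S => ((citers A S \ W).image fun v => Sum.inl (v, v)) ∪
      (((𝒬.erase P).filter fun P' => (citers A S ∩ P').Nonempty).image Sum.inr),
      ?_, ?_, ?_⟩
    · intro P S x
      show ((citers A (insert x S) \ W).image fun v => Sum.inl (v, v)) ∪ _ = _
      rw [citers_insert]
      have e1 : (citers A S ∪ citers A {x}) \ W = (citers A S \ W) ∪ (citers A {x} \ W) := by
        ext y; simp only [mem_sdiff, mem_union]; tauto
      have e2 : ((𝒬.erase P).filter fun P' => ((citers A S ∪ citers A {x}) ∩ P').Nonempty)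
          = ((𝒬.erase P).filter fun P' => (citers A S ∩ P').Nonempty)
            ∪ ((𝒬.erase P).filter fun P' => (citers A {x} ∩ P').Nonempty) := by
        rw [← Finset.filter_or]
        apply Finset.filter_congr
        intro P' _
        rw [Finset.union_inter_distrib_right]
        constructor
        · rintro ⟨y, hy⟩
          rcases mem_union.mp hy with hy | hy
          · exact Or.inl ⟨y, hy⟩
          · exact Or.inr ⟨y, hy⟩
        · rintro (⟨y, hy⟩ | ⟨y, hy⟩)
          · exact ⟨y, mem_union_left _ hy⟩
          · exact ⟨y, mem_union_right _ hy⟩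
      rw [e1, e2, Finset.image_union, Finset.image_union]
      ext t
      simp only [mem_union]
      tauto
    · intro P _
      have hd : Disjoint ((citers A P \ W).image fun v : V => (Sum.inl (v, v) : (V × V) ⊕ (Finset V)))
          (((𝒬.erase P).filter fun P' => (citers A P ∩ P').Nonempty).image Sum.inr) := by
        simp [Finset.disjoint_left]
      rw [Finset.card_union_of_disjoint hd,
        Finset.card_image_of_injective _ hinj,
        Finset.card_image_of_injective _ Sum.inr_injective, mcites]
    · intro P hP S' hS'P 𝒬' h𝒬' hS'mem href
      obtain ⟨hne', hsub', huniq'⟩ := h𝒬'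
      have hd : Disjoint ((citers A S' \ W).image fun v : V => (Sum.inl (v, v) : (V × V) ⊕ (Finset V)))
          (((𝒬.erase P).filter fun P' => (citers A S' ∩ P').Nonempty).image Sum.inr) := by
        simp [Finset.disjoint_left]
      rw [Finset.card_union_of_disjoint hd,
        Finset.card_image_of_injective _ hinj,
        Finset.card_image_of_injective _ Sum.inr_injective, mcites]
      have hmain : ((𝒬.erase P).filter fun P' => (citers A S' ∩ P').Nonempty).card ≤
          ((𝒬'.erase S').filter fun P' => (citers A S' ∩ P').Nonempty).card := by
        set tgt := (𝒬'.erase S').filter fun P' => (citers A S' ∩ P').Nonempty with htgt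
        set f : Finset V → Finset V := fun P'' =>
          if hp : ∃ Q, Q ∈ tgt ∧ ∃ w, w ∈ Q ∧ w ∈ P'' then hp.choose else ∅ with hf
        have hex : ∀ P'' ∈ (𝒬.erase P).filter (fun P' => (citers A S' ∩ P').Nonempty),
            ∃ Q, Q ∈ tgt ∧ ∃ w, w ∈ Q ∧ w ∈ P'' := by
          intro P'' hP''
          rw [mem_filter, mem_erase] at hP''
          obtain ⟨⟨hP''ne, hP''Q⟩, w, hw⟩ := hP''
          rw [mem_inter] at hw
          have hwW : w ∈ W := hsub P'' hP''Q hw.2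
          obtain ⟨Q, ⟨hQmem, hwQ⟩⟩ := (huniq' w hwW).exists
          refine ⟨Q, ?_, w, hwQ, hw.2⟩
          rw [htgt, mem_filter, mem_erase]
          refine ⟨⟨?_, hQmem⟩, w, mem_inter.mpr ⟨hw.1, hwQ⟩⟩
          intro hQS'
          apply hP''ne
          apply hdisj P'' hP''Q P hP w hw.2
          rw [← hQS'] at hS'P
          exact hS'P hwQ
        apply Finset.card_le_card_of_injOn f
        · intro P'' hP''
          have hp := hex P'' hP''
          rw [hf]
          dsimp only
          rw [dif_pos hp]
          exact hp.choose_spec.1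
        · intro P₁ hP₁ P₂ hP₂ hfeq
          simp only [Finset.coe_filter, Set.mem_setOf_eq] at hP₁ hP₂
          have hp₁ : ∃ Q, Q ∈ tgt ∧ ∃ w, w ∈ Q ∧ w ∈ P₁ :=
            hex P₁ (mem_filter.mpr hP₁)
          have hp₂ : ∃ Q, Q ∈ tgt ∧ ∃ w, w ∈ Q ∧ w ∈ P₂ :=
            hex P₂ (mem_filter.mpr hP₂)
          rw [hf] at hfeq
          dsimp only at hfeq
          rw [dif_pos hp₁, dif_pos hp₂] at hfeq
          obtain ⟨hQ₁tgt, w₁, hw₁Q, hw₁P⟩ := hp₁.choose_spec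
          obtain ⟨hQ₂tgt, w₂, hw₂Q, hw₂P⟩ := hp₂.choose_spec
          rw [hfeq] at hw₁Q
          have hQ𝒬' : hp₂.choose ∈ 𝒬' :=
            mem_of_mem_erase (Finset.mem_of_mem_filter _ hQ₂tgt)
          obtain ⟨P₀, hP₀𝒬, hQP₀⟩ := href hp₂.choose hQ𝒬'
          have e₁ : P₁ = P₀ := hdisj P₁ (mem_of_mem_erase hP₁.1) P₀ hP₀𝒬 w₁ hw₁P (hQP₀ hw₁Q)
          have e₂ : P₂ = P₀ := hdisj P₂ (mem_of_mem_erase hP₂.1) P₀ hP₀𝒬 w₂ hw₂P (hQP₀ hw₂Q)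
          rw [e₁, e₂]
      omega


/-- for `μ ∈ {scites, ucites, mcites}` and a set `X ⊆ W` no article of
which cites another article of `X`: if some partition of `W` has H-index at least `h`
w.r.t. `μ`, then some partition of `W` with H-index at least `h` w.r.t. `μ` has at most
`h²` articles of `X` in non-singleton parts. -/
theorem stmt10 (A : Finset (V × V)) (W : Finset V)
    (μ : Finset (Finset V) → Finset V → ℕ)
    (hμ : μ = (fun _ => scites A) ∨ μ = (fun _ => ucites A) ∨ μ = mcites A W)
    (h : ℕ) (X : Finset V) (hXW : X ⊆ W)
    (hX : ∀ a ∈ X, ∀ b ∈ X, a ≠ b → (a, b) ∉ A)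
    (hex : ∃ 𝒬, IsPartition W 𝒬 ∧ h ≤ hindex 𝒬 (μ 𝒬)) :
    ∃ 𝒬, IsPartition W 𝒬 ∧ h ≤ hindex 𝒬 (μ 𝒬) ∧
      (X.filter fun v => ∃ P ∈ 𝒬, v ∈ P ∧ 2 ≤ P.card).card ≤ h ^ 2 := by
  classical
  obtain ⟨𝒬, h𝒬, hh⟩ := hex
  obtain ⟨hne, hsub, huniq⟩ := id h𝒬
  have hdisj : ∀ P₁ ∈ 𝒬, ∀ P₂ ∈ 𝒬, ∀ v, v ∈ P₁ → v ∈ P₂ → P₁ = P₂ := by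
    intro P₁ h1 P₂ h2 v hv1 hv2
    obtain ⟨P, -, hPuniq⟩ := huniq v (hsub P₁ h1 hv1)
    rw [hPuniq P₁ ⟨h1, hv1⟩, hPuniq P₂ ⟨h2, hv2⟩]
  have hfilter : h ≤ (𝒬.filter fun P => h ≤ μ 𝒬 P).card := by
    rcases Nat.eq_zero_or_pos h with rfl | hpos
    · exact Nat.zero_le _
    · have hkpos : hindex 𝒬 (μ 𝒬) ≠ 0 := by omega
      have hspec : hindex 𝒬 (μ 𝒬) ≤
          (𝒬.filter fun P => hindex 𝒬 (μ 𝒬) ≤ μ 𝒬 P).card :=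
        Nat.findGreatest_of_ne_zero
          (P := fun k => k ≤ (𝒬.filter fun P => k ≤ μ 𝒬 P).card)
          (n := 𝒬.card) rfl hkpos
      refine le_trans hh (le_trans hspec (card_le_card ?_))
      exact Finset.monotone_filter_right _ (fun P _ hP => le_trans hh hP)
  obtain ⟨𝒮₀, h𝒮₀sub, h𝒮₀card⟩ := Finset.exists_subset_card_eq hfilter
  have h𝒮₀ : ∀ P ∈ 𝒮₀, P ∈ 𝒬 ∧ h ≤ μ 𝒬 P := fun P hP => mem_filter.mp (h𝒮₀sub hP)
  obtain ⟨c, hcadd, hcval, hcnew⟩ := exists_cover A W 𝒬 h𝒬 μ hμ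
  have hsh : ∀ P : Finset V, ∃ P', P ∈ 𝒮₀ →
      P' ⊆ P ∧ P'.Nonempty ∧ (P' ∩ X).card ≤ h ∧ h ≤ (c P P').card := by
    intro P
    by_cases hP : P ∈ 𝒮₀
    · have h1 : 1 ≤ h := by
        rw [← h𝒮₀card]
        exact Finset.card_pos.mpr ⟨P, hP⟩
      obtain ⟨P', hp⟩ := shrink (c P) (hcadd P) h h1 X P (hne P (h𝒮₀ P hP).1)
        (le_trans (h𝒮₀ P hP).2 (hcval P (h𝒮₀ P hP).1))
      exact ⟨P', fun _ => hp⟩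
    · exact ⟨∅, fun hc => absurd hc hP⟩
  choose g hg using hsh
  have hgsub : ∀ P ∈ 𝒮₀, g P ⊆ P := fun P hP => (hg P hP).1
  have hgne : ∀ P ∈ 𝒮₀, (g P).Nonempty := fun P hP => (hg P hP).2.1
  have hgX : ∀ P ∈ 𝒮₀, ((g P) ∩ X).card ≤ h := fun P hP => (hg P hP).2.2.1
  have hgc : ∀ P ∈ 𝒮₀, h ≤ (c P (g P)).card := fun P hP => (hg P hP).2.2.2
  set R := W \ 𝒮₀.biUnion g with hR
  set 𝒬' := 𝒮₀.image g ∪ R.image (fun v => ({v} : Finset V)) with h𝒬'def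
  have hmem𝒬' : ∀ Q, Q ∈ 𝒬' ↔ (∃ P ∈ 𝒮₀, g P = Q) ∨ (∃ v ∈ R, ({v} : Finset V) = Q) := by
    intro Q
    rw [h𝒬'def, mem_union, mem_image, mem_image]
  have hginj : ∀ P₁ ∈ 𝒮₀, ∀ P₂ ∈ 𝒮₀, g P₁ = g P₂ → P₁ = P₂ := by
    intro P₁ h1 P₂ h2 he
    obtain ⟨v, hv⟩ := hgne P₁ h1
    exact hdisj P₁ (h𝒮₀ P₁ h1).1 P₂ (h𝒮₀ P₂ h2).1 v (hgsub P₁ h1 hv)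
      (hgsub P₂ h2 (he ▸ hv))
  have hpart : IsPartition W 𝒬' := by
    refine ⟨?_, ?_, ?_⟩
    · intro Q hQ
      rcases (hmem𝒬' Q).mp hQ with ⟨P, hP, rfl⟩ | ⟨v, hv, rfl⟩
      · exact hgne P hP
      · exact singleton_nonempty v
    · intro Q hQ
      rcases (hmem𝒬' Q).mp hQ with ⟨P, hP, rfl⟩ | ⟨v, hv, rfl⟩
      · exact subset_trans (hgsub P hP) (hsub P (h𝒮₀ P hP).1)
      · rw [singleton_subset_iff]
        exact (mem_sdiff.mp hv).1
    · intro v hv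
      by_cases hvb : v ∈ 𝒮₀.biUnion g
      · obtain ⟨P, hP, hvP⟩ := mem_biUnion.mp hvb
        refine ⟨g P, ⟨(hmem𝒬' _).mpr (Or.inl ⟨P, hP, rfl⟩), hvP⟩, ?_⟩
        rintro Q ⟨hQ, hvQ⟩
        rcases (hmem𝒬' Q).mp hQ with ⟨P₂, hP₂, rfl⟩ | ⟨w, hw, rfl⟩
        · rw [hdisj P₂ (h𝒮₀ P₂ hP₂).1 P (h𝒮₀ P hP).1 v (hgsub P₂ hP₂ hvQ)
            (hgsub P hP hvP)]
        · rw [mem_singleton] at hvQ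
          exact absurd (hvQ ▸ hvb) (mem_sdiff.mp hw).2
      · refine ⟨{v}, ⟨(hmem𝒬' _).mpr (Or.inr ⟨v, mem_sdiff.mpr ⟨hv, hvb⟩, rfl⟩),
          mem_singleton_self v⟩, ?_⟩
        rintro Q ⟨hQ, hvQ⟩
        rcases (hmem𝒬' Q).mp hQ with ⟨P₂, hP₂, rfl⟩ | ⟨w, hw, rfl⟩
        · exact absurd (mem_biUnion.mpr ⟨P₂, hP₂, hvQ⟩) hvb
        · rw [mem_singleton] at hvQ
          rw [← hvQ]
  have href : ∀ Q ∈ 𝒬', ∃ P₀ ∈ 𝒬, Q ⊆ P₀ := by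
    intro Q hQ
    rcases (hmem𝒬' Q).mp hQ with ⟨P, hP, rfl⟩ | ⟨v, hv, rfl⟩
    · exact ⟨P, (h𝒮₀ P hP).1, hgsub P hP⟩
    · obtain ⟨P₀, ⟨hP₀, hvP₀⟩, -⟩ := huniq v (mem_sdiff.mp hv).1
      exact ⟨P₀, hP₀, singleton_subset_iff.mpr hvP₀⟩
  have hμval : ∀ P ∈ 𝒮₀, h ≤ μ 𝒬' (g P) := by
    intro P hP
    refine le_trans (hgc P hP)
      (hcnew P (h𝒮₀ P hP).1 (g P) (hgsub P hP) 𝒬' hpart ?_ href)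
    exact (hmem𝒬' _).mpr (Or.inl ⟨P, hP, rfl⟩)
  have himg : (𝒮₀.image g).card = h := by
    rw [Finset.card_image_of_injOn (fun P₁ h1 P₂ h2 he => hginj P₁ h1 P₂ h2 he),
      h𝒮₀card]
  have hsubset𝒬' : 𝒮₀.image g ⊆ 𝒬' := by
    rw [h𝒬'def]
    exact subset_union_left
  have hhind : h ≤ hindex 𝒬' (μ 𝒬') := by
    unfold hindex
    apply Nat.le_findGreatest
    · calc h = (𝒮₀.image g).card := himg.symm
        _ ≤ 𝒬'.card := card_le_card hsubset𝒬'
    · have hsub2 : 𝒮₀.image g ⊆ 𝒬'.filter fun Q => h ≤ μ 𝒬' Q := by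
        intro Q hQ
        obtain ⟨P, hP, rfl⟩ := mem_image.mp hQ
        exact mem_filter.mpr ⟨hsubset𝒬' hQ, hμval P hP⟩
      calc h = (𝒮₀.image g).card := himg.symm
        _ ≤ _ := card_le_card hsub2
  refine ⟨𝒬', hpart, hhind, ?_⟩
  have hcount : (X.filter fun v => ∃ Q ∈ 𝒬', v ∈ Q ∧ 2 ≤ Q.card) ⊆
      𝒮₀.biUnion fun P => g P ∩ X := by
    intro v hv
    obtain ⟨hvX, Q, hQ, hvQ, hQ2⟩ := mem_filter.mp hv
    rcases (hmem𝒬' Q).mp hQ with ⟨P, hP, rfl⟩ | ⟨w, hw, rfl⟩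
    · exact mem_biUnion.mpr ⟨P, hP, mem_inter.mpr ⟨hvQ, hvX⟩⟩
    · rw [Finset.card_singleton] at hQ2
      omega
  calc (X.filter fun v => ∃ Q ∈ 𝒬', v ∈ Q ∧ 2 ≤ Q.card).card
      ≤ (𝒮₀.biUnion fun P => g P ∩ X).card := card_le_card hcount
    _ ≤ ∑ P ∈ 𝒮₀, (g P ∩ X).card := card_biUnion_le
    _ ≤ ∑ P ∈ 𝒮₀, h := Finset.sum_le_sum (fun P hP => hgX P hP)
    _ = h * h := by rw [Finset.sum_const, h𝒮₀card, smul_eq_mul]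
    _ = h ^ 2 := (sq h).symm
end

section
/- Let h ≥ 1, let C ⊆ V be a set such that every arc of A has at least one endpoint in C, let v ∈ C be an article that cites more than 2h² + 2h articles of W ∖ C, and let (v, w) ∈ A be an arc with w ∈ W ∖ C. Then, for each μ ∈ {scites, ucites, mcites}, there is a partition of W with H-index at least h with respect to μ in the citation graph D if and only if there is such a partition in the citation graph obtained from D by deleting the arc (v, w). -/
open Finset

variable {V : Type*} [Fintype V] [DecidableEq V]

set_option linter.unusedSectionVars false
set_option linter.unusedVariables false

/- ==================== basic lemmas ==================== -/

lemma mem_citers {A : Finset (V × V)} {P : Finset V} {u : V} :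
    u ∈ citers A P ↔ ∃ x ∈ P, (u, x) ∈ A := by
  simp [citers]

lemma citers_mono_right {A : Finset (V × V)} {P Q : Finset V} (h : P ⊆ Q) :
    citers A P ⊆ citers A Q := by
  intro u hu
  rw [mem_citers] at hu ⊢
  obtain ⟨x, hx, hux⟩ := hu
  exact ⟨x, h hx, hux⟩

lemma citers_mono_left {A B : Finset (V × V)} (h : A ⊆ B) (P : Finset V) :
    citers A P ⊆ citers B P := by
  intro u hu
  rw [mem_citers] at hu ⊢
  obtain ⟨x, hx, hux⟩ := hu
  exact ⟨x, hx, h hux⟩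

lemma indeg_mono {A B : Finset (V × V)} (h : A ⊆ B) (x : V) : indeg A x ≤ indeg B x :=
  card_le_card (fun u hu => by simp only [indeg, mem_filter, mem_univ, true_and] at hu ⊢; exact h hu)

lemma one_le_indeg {A : Finset (V × V)} {u x : V} (h : (u, x) ∈ A) : 1 ≤ indeg A x := by
  rw [indeg, Nat.one_le_iff_ne_zero, ← Nat.pos_iff_ne_zero, card_pos]
  exact ⟨u, by simp [h]⟩

lemma scites_mono {A B : Finset (V × V)} (h : A ⊆ B) (P : Finset V) :
    scites A P ≤ scites B P :=
  Finset.sum_le_sum fun x _ => indeg_mono h x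

lemma ucites_mono {A B : Finset (V × V)} (h : A ⊆ B) (P : Finset V) :
    ucites A P ≤ ucites B P :=
  card_le_card (citers_mono_left h P)

lemma mcites_mono {A B : Finset (V × V)} (h : A ⊆ B) (W : Finset V)
    (𝒬 : Finset (Finset V)) (P : Finset V) : mcites A W 𝒬 P ≤ mcites B W 𝒬 P := by
  unfold mcites
  refine Nat.add_le_add (card_le_card (sdiff_subset_sdiff (citers_mono_left h P) le_rfl))
    (card_le_card ?_)
  intro R hR
  simp only [mem_filter] at hR ⊢
  obtain ⟨hR1, x, hx⟩ := hR
  rw [mem_inter] at hx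
  exact ⟨hR1, ⟨x, mem_inter.2 ⟨citers_mono_left h P hx.1, hx.2⟩⟩⟩

/- ==================== hindex lemmas ==================== -/

lemma hindex_ge_iff {𝒬 : Finset (Finset V)} {μ : Finset V → ℕ} {h : ℕ} :
    h ≤ hindex 𝒬 μ ↔ h ≤ (𝒬.filter fun P => h ≤ μ P).card := by
  constructor
  · intro hle
    rcases Nat.eq_zero_or_pos h with rfl | hpos
    · exact Nat.zero_le _
    have h1 : 0 < hindex 𝒬 μ := lt_of_lt_of_le hpos hle
    have h2 : hindex 𝒬 μ ≤ (𝒬.filter fun P => hindex 𝒬 μ ≤ μ P).card := by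
      have := Nat.findGreatest_eq_iff (P := fun k => k ≤ (𝒬.filter fun P => k ≤ μ P).card)
        (k := 𝒬.card) (m := hindex 𝒬 μ)
      exact ((this.1 rfl).2.1) (Nat.pos_iff_ne_zero.1 h1)
    calc h ≤ hindex 𝒬 μ := hle
      _ ≤ (𝒬.filter fun P => hindex 𝒬 μ ≤ μ P).card := h2
      _ ≤ (𝒬.filter fun P => h ≤ μ P).card := by
          apply card_le_card
          intro P hP
          rw [mem_filter] at hP ⊢
          exact ⟨hP.1, le_trans hle hP.2⟩
  · intro hcard
    exact Nat.le_findGreatest (le_trans hcard (card_le_card (filter_subset _ _))) hcard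

lemma hindex_mono_mu {𝒬 : Finset (Finset V)} {μ ν : Finset V → ℕ}
    (h : ∀ P ∈ 𝒬, μ P ≤ ν P) : hindex 𝒬 μ ≤ hindex 𝒬 ν := by
  rw [hindex_ge_iff]
  calc hindex 𝒬 μ ≤ (𝒬.filter fun P => hindex 𝒬 μ ≤ μ P).card := hindex_ge_iff.1 le_rfl
    _ ≤ (𝒬.filter fun P => hindex 𝒬 μ ≤ ν P).card := by
        apply card_le_card
        intro P hP
        rw [mem_filter] at hP ⊢
        exact ⟨hP.1, le_trans hP.2 (h P hP.1)⟩

/- ==================== partition lemmas ==================== -/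

lemma parts_eq_of_mem {W : Finset V} {𝒬 : Finset (Finset V)} (hpart : IsPartition W 𝒬)
    {P Q : Finset V} {x : V} (hP : P ∈ 𝒬) (hQ : Q ∈ 𝒬) (hxP : x ∈ P) (hxQ : x ∈ Q) :
    P = Q := by
  obtain ⟨-, hsub, huniq⟩ := hpart
  obtain ⟨R, -, hR⟩ := huniq x (hsub P hP hxP)
  rw [hR P ⟨hP, hxP⟩, hR Q ⟨hQ, hxQ⟩]

/- ==================== completion partition ==================== -/

def comp (W : Finset V) (𝒢 : Finset (Finset V)) : Finset (Finset V) :=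
  𝒢 ∪ (W \ 𝒢.sup id).image fun x => {x}

lemma mem_comp {W : Finset V} {𝒢 : Finset (Finset V)} {R : Finset V} :
    R ∈ comp W 𝒢 ↔ R ∈ 𝒢 ∨ ∃ x, x ∈ W ∧ (∀ G ∈ 𝒢, x ∉ G) ∧ R = {x} := by
  simp only [comp, mem_union, mem_image, mem_sdiff, Finset.mem_sup, id]
  constructor
  · rintro (h | ⟨x, ⟨hxW, hx⟩, rfl⟩)
    · exact Or.inl h
    · exact Or.inr ⟨x, hxW, fun G hG hxG => hx ⟨G, hG, hxG⟩, rfl⟩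
  · rintro (h | ⟨x, hxW, hx, rfl⟩)
    · exact Or.inl h
    · exact Or.inr ⟨x, ⟨hxW, fun ⟨G, hG, hxG⟩ => hx G hG hxG⟩, rfl⟩

lemma comp_isPartition {W : Finset V} {𝒢 : Finset (Finset V)}
    (hsub : ∀ G ∈ 𝒢, G ⊆ W) (hne : ∀ G ∈ 𝒢, G.Nonempty)
    (hdisj : ∀ G ∈ 𝒢, ∀ G' ∈ 𝒢, ∀ x, x ∈ G → x ∈ G' → G = G') :
    IsPartition W (comp W 𝒢) := by
  refine ⟨?_, ?_, ?_⟩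
  · intro P hP
    rcases mem_comp.1 hP with h | ⟨x, _, _, rfl⟩
    · exact hne P h
    · exact ⟨x, mem_singleton_self x⟩
  · intro P hP
    rcases mem_comp.1 hP with h | ⟨x, hxW, _, rfl⟩
    · exact hsub P h
    · intro y hy; rw [mem_singleton] at hy; subst hy; exact hxW
  · intro x hxW
    by_cases hx : ∃ G ∈ 𝒢, x ∈ G
    · obtain ⟨G, hG, hxG⟩ := hx
      refine ⟨G, ⟨mem_comp.2 (Or.inl hG), hxG⟩, ?_⟩
      rintro R ⟨hR, hxR⟩
      rcases mem_comp.1 hR with h | ⟨y, _, hy, rfl⟩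
      · exact hdisj R h G hG x hxR hxG
      · rw [mem_singleton] at hxR; subst hxR; exact absurd hxG (hy G hG)
    · push_neg at hx
      refine ⟨{x}, ⟨mem_comp.2 (Or.inr ⟨x, hxW, hx, rfl⟩), mem_singleton_self x⟩, ?_⟩
      rintro R ⟨hR, hxR⟩
      rcases mem_comp.1 hR with h | ⟨y, _, _, rfl⟩
      · exact absurd hxR (hx R h)
      · rw [mem_singleton] at hxR; subst hxR; rfl

lemma subset_comp {W : Finset V} {𝒢 : Finset (Finset V)} : 𝒢 ⊆ comp W 𝒢 :=
  subset_union_left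

/- ==================== erase lemmas ==================== -/

variable {A : Finset (V × V)} {v w : V}

lemma mem_erase_arc {a : V × V} : a ∈ A.erase (v, w) ↔ a ∈ A ∧ a ≠ (v, w) := by
  rw [Finset.mem_erase, and_comm]

lemma citers_erase_subset (P : Finset V) : citers (A.erase (v, w)) P ⊆ citers A P :=
  citers_mono_left (erase_subset _ _) P

lemma citers_subset_insert (P : Finset V) :
    citers A P ⊆ insert v (citers (A.erase (v, w)) P) := by
  intro u hu
  rw [mem_citers] at hu
  obtain ⟨x, hx, hux⟩ := hu
  by_cases he : (u, x) = (v, w)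
  · rw [Prod.mk.injEq] at he
    rw [mem_insert]; exact Or.inl he.1
  · exact mem_insert_of_mem (mem_citers.2 ⟨x, hx, mem_erase_arc.2 ⟨hux, he⟩⟩)

lemma citers_erase_eq {P : Finset V} (hwP : w ∉ P) :
    citers (A.erase (v, w)) P = citers A P := by
  apply Finset.Subset.antisymm (citers_erase_subset P)
  intro u hu
  rw [mem_citers] at hu ⊢
  obtain ⟨x, hx, hux⟩ := hu
  refine ⟨x, hx, mem_erase_arc.2 ⟨hux, fun he => ?_⟩⟩
  rw [Prod.mk.injEq] at he
  exact hwP (he.2 ▸ hx)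

lemma indeg_erase_eq {x : V} (hx : x ≠ w) : indeg (A.erase (v, w)) x = indeg A x := by
  unfold indeg
  congr 1
  ext u
  simp only [mem_filter, mem_univ, true_and, mem_erase_arc]
  exact ⟨fun h => h.1, fun h => ⟨h, fun he => hx (congrArg Prod.snd he)⟩⟩

lemma indeg_le_erase_add_one (x : V) : indeg A x ≤ indeg (A.erase (v, w)) x + 1 := by
  unfold indeg
  have : (Finset.univ.filter fun u => (u, x) ∈ A) ⊆
      insert v (Finset.univ.filter fun u => (u, x) ∈ A.erase (v, w)) := by
    intro u hu
    simp only [mem_filter, mem_univ, true_and] at hu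
    by_cases he : (u, x) = (v, w)
    · rw [Prod.mk.injEq] at he
      exact mem_insert.2 (Or.inl he.1)
    · refine mem_insert_of_mem ?_
      simp only [mem_filter, mem_univ, true_and]
      exact mem_erase_arc.2 ⟨hu, he⟩
  refine le_trans (card_le_card this) ?_
  refine le_trans (card_insert_le _ _) ?_
  omega

lemma scites_erase_eq {P : Finset V} (hwP : w ∉ P) :
    scites (A.erase (v, w)) P = scites A P := by
  unfold scites
  apply Finset.sum_congr rfl
  intro x hx
  exact indeg_erase_eq (fun he => hwP (he ▸ hx))

lemma scites_le_erase_add_one (P : Finset V) :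
    scites A P ≤ scites (A.erase (v, w)) P + 1 := by
  by_cases hwP : w ∈ P
  · unfold scites
    rw [← Finset.sum_erase_add _ _ hwP, ← Finset.sum_erase_add _ (indeg (A.erase (v, w))) hwP]
    have h1 : ∑ x ∈ P.erase w, indeg A x = ∑ x ∈ P.erase w, indeg (A.erase (v, w)) x :=
      Finset.sum_congr rfl fun x hx => (indeg_erase_eq (ne_of_mem_erase hx)).symm
    rw [h1, add_assoc]
    exact Nat.add_le_add_left (indeg_le_erase_add_one w) _
  · rw [scites_erase_eq hwP]; omega

lemma ucites_erase_eq {P : Finset V} (hwP : w ∉ P) :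
    ucites (A.erase (v, w)) P = ucites A P := by
  unfold ucites; rw [citers_erase_eq hwP]

lemma ucites_le_erase_add_one (P : Finset V) :
    ucites A P ≤ ucites (A.erase (v, w)) P + 1 := by
  unfold ucites
  refine le_trans (card_le_card (citers_subset_insert (v := v) (w := w) P)) ?_
  refine le_trans (card_insert_le _ _) ?_
  omega

lemma ucites_erase_eq_of_mem_citers {P : Finset V}
    (hv : v ∈ citers (A.erase (v, w)) P) : ucites A P ≤ ucites (A.erase (v, w)) P := by
  apply card_le_card
  intro u hu
  have h2 := citers_subset_insert (v := v) (w := w) P hu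
  rw [mem_insert] at h2
  rcases h2 with h | h
  · rwa [h]
  · exact h

lemma mcites_erase_eq {W : Finset V} {𝒬 : Finset (Finset V)} {P : Finset V} (hwP : w ∉ P) :
    mcites (A.erase (v, w)) W 𝒬 P = mcites A W 𝒬 P := by
  unfold mcites; rw [citers_erase_eq hwP]
/- ==================== mcites erase bounds ==================== -/

lemma mcites_le_erase_add_one {W : Finset V} {𝒬 : Finset (Finset V)}
    (hpart : IsPartition W 𝒬) (P : Finset V) :
    mcites A W 𝒬 P ≤ mcites (A.erase (v, w)) W 𝒬 P + 1 := by
  classical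
  set A' := A.erase (v, w) with hA'
  unfold mcites
  by_cases hvW : v ∈ W
  · -- term1 does not increase, term2 by at most 1
    have h1 : citers A P \ W ⊆ citers A' P \ W := by
      intro x hx
      rw [mem_sdiff] at hx ⊢
      have h2 := citers_subset_insert (v := v) (w := w) P hx.1
      rw [mem_insert] at h2
      rcases h2 with rfl | h
      · exact absurd hvW hx.2
      · exact ⟨h, hx.2⟩
    obtain ⟨R, ⟨hR𝒬, hvR⟩, hRuniq⟩ := hpart.2.2 v hvW
    have h2 : ((𝒬.erase P).filter fun P' => (citers A P ∩ P').Nonempty) ⊆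
        insert R ((𝒬.erase P).filter fun P' => (citers A' P ∩ P').Nonempty) := by
      intro P' hP'
      rw [mem_filter] at hP'
      by_cases hne : (citers A' P ∩ P').Nonempty
      · exact mem_insert_of_mem (mem_filter.2 ⟨hP'.1, hne⟩)
      · obtain ⟨x, hx⟩ := hP'.2
        rw [mem_inter] at hx
        have h3 := citers_subset_insert (v := v) (w := w) P hx.1
        rw [mem_insert] at h3
        rcases h3 with rfl | h
        · rw [mem_insert]
          exact Or.inl (hRuniq P' ⟨mem_of_mem_erase hP'.1, hx.2⟩)
        · exact absurd ⟨x, mem_inter.2 ⟨h, hx.2⟩⟩ hne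
    have := card_le_card h2
    have h4 := card_insert_le R ((𝒬.erase P).filter fun P' => (citers A' P ∩ P').Nonempty)
    have h5 := card_le_card h1
    omega
  · -- term2 does not increase, term1 by at most 1
    have h1 : citers A P \ W ⊆ insert v (citers A' P \ W) := by
      intro x hx
      rw [mem_sdiff] at hx
      have h2 := citers_subset_insert (v := v) (w := w) P hx.1
      rw [mem_insert] at h2
      rcases h2 with rfl | h
      · exact mem_insert_self _ _
      · exact mem_insert_of_mem (mem_sdiff.2 ⟨h, hx.2⟩)
    have h2 : ((𝒬.erase P).filter fun P' => (citers A P ∩ P').Nonempty) ⊆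
        ((𝒬.erase P).filter fun P' => (citers A' P ∩ P').Nonempty) := by
      intro P' hP'
      rw [mem_filter] at hP' ⊢
      refine ⟨hP'.1, ?_⟩
      obtain ⟨x, hx⟩ := hP'.2
      rw [mem_inter] at hx
      have h3 := citers_subset_insert (v := v) (w := w) P hx.1
      rw [mem_insert] at h3
      rcases h3 with rfl | h
      · exact absurd (hpart.2.1 P' (mem_of_mem_erase hP'.1) hx.2) hvW
      · exact ⟨x, mem_inter.2 ⟨h, hx.2⟩⟩
    have h3 := card_le_card h1
    have h4 := card_insert_le v (citers A' P \ W)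
    have h5 := card_le_card h2
    omega

lemma mcites_erase_drop {W : Finset V} {𝒬 : Finset (Finset V)}
    (hpart : IsPartition W 𝒬) {P : Finset V}
    (hdrop : mcites (A.erase (v, w)) W 𝒬 P < mcites A W 𝒬 P) :
    v ∉ citers (A.erase (v, w)) P ∧
      (v ∈ W → ∃ R ∈ 𝒬, v ∈ R ∧ R ≠ P ∧ ∀ u ∈ citers (A.erase (v, w)) P, u ∉ R) := by
  classical
  set A' := A.erase (v, w) with hA'
  have hcc : v ∈ citers A' P → citers A P = citers A' P := by
    intro hv
    apply Finset.Subset.antisymm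
    · intro x hx
      have h2 := citers_subset_insert (v := v) (w := w) P hx
      rw [mem_insert] at h2
      rcases h2 with rfl | h
      · exact hv
      · exact h
    · exact citers_erase_subset P
  constructor
  · intro hv
    rw [show mcites A W 𝒬 P = mcites A' W 𝒬 P by unfold mcites; rw [hcc hv]] at hdrop
    omega
  · intro hvW
    -- term1 does not increase (v ∈ W), so term2 must drop
    have h1 : citers A P \ W ⊆ citers A' P \ W := by
      intro x hx
      rw [mem_sdiff] at hx ⊢
      have h2 := citers_subset_insert (v := v) (w := w) P hx.1
      rw [mem_insert] at h2
      rcases h2 with rfl | h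
      · exact absurd hvW hx.2
      · exact ⟨h, hx.2⟩
    have h5 := card_le_card h1
    have hns : ¬ ((𝒬.erase P).filter fun P' => (citers A P ∩ P').Nonempty) ⊆
        ((𝒬.erase P).filter fun P' => (citers A' P ∩ P').Nonempty) := by
      intro hsub
      have := card_le_card hsub
      unfold mcites at hdrop
      omega
    obtain ⟨P', hP'mem, hP'not⟩ := Finset.not_subset.1 hns
    rw [mem_filter] at hP'mem
    have hP'𝒬 : P' ∈ 𝒬 := mem_of_mem_erase hP'mem.1
    have hempty : ∀ u ∈ citers A' P, u ∉ P' := by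
      intro u hu huP'
      exact hP'not (mem_filter.2 ⟨hP'mem.1, ⟨u, mem_inter.2 ⟨hu, huP'⟩⟩⟩)
    obtain ⟨x, hx⟩ := hP'mem.2
    rw [mem_inter] at hx
    have h6 := citers_subset_insert (v := v) (w := w) P hx.1
    rw [mem_insert] at h6
    rcases h6 with rfl | h
    · exact ⟨P', hP'𝒬, hx.2, ne_of_mem_erase hP'mem.1, hempty⟩
    · exact absurd hx.2 (hempty x h)

/- ==================== extraction lemmas ==================== -/

lemma scites_extract {B : Finset (V × V)} {P : Finset V} {k : ℕ} (hk : k ≤ scites B P) :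
    ∃ S, S ⊆ P ∧ S.card ≤ k ∧ k ≤ scites B S := by
  classical
  by_cases hc : (P.filter fun x => 0 < indeg B x).card ≤ k
  · refine ⟨P.filter fun x => 0 < indeg B x, filter_subset _ _, hc, le_trans hk (le_of_eq ?_)⟩
    unfold scites
    rw [Finset.sum_filter_of_ne]
    intro x _ hx
    omega
  · push_neg at hc
    obtain ⟨S, hS, hcard⟩ := exists_subset_card_eq (le_of_lt hc)
    refine ⟨S, le_trans hS (filter_subset _ _), le_of_eq hcard, ?_⟩
    have : ∀ x ∈ S, 1 ≤ indeg B x := fun x hx => (mem_filter.1 (hS hx)).2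
    calc k = S.card := hcard.symm
      _ = ∑ _x ∈ S, 1 := by rw [card_eq_sum_ones]
      _ ≤ scites B S := Finset.sum_le_sum this

lemma ucites_extract [Nonempty V] {B : Finset (V × V)} {P : Finset V} {k : ℕ}
    (hk : k ≤ ucites B P) : ∃ S, S ⊆ P ∧ S.card ≤ k ∧ k ≤ ucites B S := by
  classical
  obtain ⟨T, hT, hTcard⟩ := exists_subset_card_eq hk
  set f : V → V := fun u => if hh : ∃ x ∈ P, (u, x) ∈ B then hh.choose else Classical.arbitrary V
    with hf
  have hfP : ∀ u ∈ T, f u ∈ P ∧ (u, f u) ∈ B := by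
    intro u hu
    have hu' : ∃ x ∈ P, (u, x) ∈ B := mem_citers.1 (hT hu)
    simp only [hf, dif_pos hu']
    exact ⟨hu'.choose_spec.1, hu'.choose_spec.2⟩
  refine ⟨T.image f, ?_, le_trans card_image_le (le_of_eq hTcard), ?_⟩
  · intro y hy
    obtain ⟨u, hu, rfl⟩ := mem_image.1 hy
    exact (hfP u hu).1
  · rw [← hTcard]
    unfold ucites
    apply card_le_card
    intro u hu
    rw [mem_citers]
    exact ⟨f u, mem_image_of_mem f hu, (hfP u hu).2⟩

lemma mcites_extract [Nonempty V] {B : Finset (V × V)} {W : Finset V}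
    {𝒬 : Finset (Finset V)} (hpart : IsPartition W 𝒬) {P : Finset V} (hP : P ∈ 𝒬)
    {k : ℕ} (hk : k ≤ mcites B W 𝒬 P) :
    ∃ S U, S ⊆ P ∧ S.card ≤ k ∧ U.card = k ∧ U ⊆ citers B S ∧
      (∀ u ∈ U, u ∉ P) ∧
      (∀ u₁ ∈ U, ∀ u₂ ∈ U, ∀ Q ∈ 𝒬, u₁ ∈ Q → u₂ ∈ Q → u₁ = u₂) := by
  classical
  set X := citers B P \ W with hX
  set F := (𝒬.erase P).filter (fun P' => (citers B P ∩ P').Nonempty) with hF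
  have hsum : k ≤ X.card + F.card := hk
  obtain ⟨X₀, hX₀sub, hX₀card⟩ := exists_subset_card_eq (min_le_right k X.card)
  have hb : k - min k X.card ≤ F.card := by omega
  obtain ⟨F₀, hF₀sub, hF₀card⟩ := exists_subset_card_eq hb
  set g : Finset V → V := fun R =>
    if hh : (citers B P ∩ R).Nonempty then hh.choose else Classical.arbitrary V with hg
  have hgmem : ∀ R ∈ F₀, g R ∈ citers B P ∧ g R ∈ R := by
    intro R hR
    have h2 := (mem_filter.1 (hF₀sub hR)).2
    simp only [hg, dif_pos h2]
    have := h2.choose_spec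
    rw [mem_inter] at this
    exact this
  have hF₀𝒬 : ∀ R ∈ F₀, R ∈ 𝒬 := fun R hR => mem_of_mem_erase (mem_of_mem_filter _ (hF₀sub hR))
  have hginj : Set.InjOn g F₀ := by
    intro R₁ h₁ R₂ h₂ heq
    exact parts_eq_of_mem hpart (hF₀𝒬 R₁ h₁) (hF₀𝒬 R₂ h₂) (hgmem R₁ h₁).2
      (heq ▸ (hgmem R₂ h₂).2)
  set U := X₀ ∪ F₀.image g with hU
  have hXW : ∀ x ∈ X₀, x ∉ W := fun x hx => (mem_sdiff.1 (hX₀sub hx)).2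
  have himgW : ∀ x ∈ F₀.image g, x ∈ W := by
    intro x hx
    obtain ⟨R, hR, rfl⟩ := mem_image.1 hx
    exact hpart.2.1 R (hF₀𝒬 R hR) (hgmem R hR).2
  have hdisj : Disjoint X₀ (F₀.image g) :=
    Finset.disjoint_left.2 fun x hx hx' => hXW x hx (himgW x hx')
  have hUcard : U.card = k := by
    rw [hU, card_union_of_disjoint hdisj, hX₀card, card_image_of_injOn hginj, hF₀card]
    have := min_le_left k X.card
    omega
  have hUciters : ∀ u ∈ U, u ∈ citers B P := by
    intro u hu
    rcases mem_union.1 hu with h | h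
    · exact (mem_sdiff.1 (hX₀sub h)).1
    · obtain ⟨R, hR, rfl⟩ := mem_image.1 h
      exact (hgmem R hR).1
  set f : V → V := fun u => if hh : ∃ x ∈ P, (u, x) ∈ B then hh.choose else Classical.arbitrary V
    with hf
  have hfP : ∀ u ∈ U, f u ∈ P ∧ (u, f u) ∈ B := by
    intro u hu
    have hu' : ∃ x ∈ P, (u, x) ∈ B := mem_citers.1 (hUciters u hu)
    simp only [hf, dif_pos hu']
    exact ⟨hu'.choose_spec.1, hu'.choose_spec.2⟩
  refine ⟨U.image f, U, ?_, ?_, ?_, ?_, ?_, ?_⟩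
  · intro y hy
    obtain ⟨u, hu, rfl⟩ := mem_image.1 hy
    exact (hfP u hu).1
  · exact le_trans card_image_le (le_of_eq hUcard)
  · exact hUcard
  · intro u hu
    rw [mem_citers]
    exact ⟨f u, mem_image_of_mem f hu, (hfP u hu).2⟩
  · intro u hu huP
    rcases mem_union.1 hu with h | h
    · exact hXW u h (hpart.2.1 P hP huP)
    · obtain ⟨R, hR, rfl⟩ := mem_image.1 h
      exact ne_of_mem_erase (mem_of_mem_filter _ (hF₀sub hR))
        (parts_eq_of_mem hpart (hF₀𝒬 R hR) hP (hgmem R hR).2 huP)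
  · intro u₁ hu₁ u₂ hu₂ Q hQ hu₁Q hu₂Q
    have hW₁ : u₁ ∈ W := hpart.2.1 Q hQ hu₁Q
    have hW₂ : u₂ ∈ W := hpart.2.1 Q hQ hu₂Q
    have h₁ : u₁ ∈ F₀.image g := by
      rcases mem_union.1 hu₁ with h | h
      · exact absurd hW₁ (hXW u₁ h)
      · exact h
    have h₂ : u₂ ∈ F₀.image g := by
      rcases mem_union.1 hu₂ with h | h
      · exact absurd hW₂ (hXW u₂ h)
      · exact h
    obtain ⟨R₁, hR₁, rfl⟩ := mem_image.1 h₁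
    obtain ⟨R₂, hR₂, rfl⟩ := mem_image.1 h₂
    have e₁ : R₁ = Q := parts_eq_of_mem hpart (hF₀𝒬 R₁ hR₁) hQ (hgmem R₁ hR₁).2 hu₁Q
    have e₂ : R₂ = Q := parts_eq_of_mem hpart (hF₀𝒬 R₂ hR₂) hQ (hgmem R₂ hR₂).2 hu₂Q
    rw [e₁, e₂]
/- ==================== counting lemma ==================== -/

lemma mcites_ge_of_units [Nonempty V] {B : Finset (V × V)} {W : Finset V}
    {𝒬' : Finset (Finset V)} (hpart : IsPartition W 𝒬') {G : Finset V} {U : Finset V}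
    (hUc : U ⊆ citers B G) (hUG : ∀ u ∈ U, u ∉ G)
    (hinj : ∀ u₁ ∈ U, ∀ u₂ ∈ U, ∀ R ∈ 𝒬', u₁ ∈ R → u₂ ∈ R → u₁ = u₂) :
    U.card ≤ mcites B W 𝒬' G := by
  classical
  have hsplit : (U \ W).card + (U ∩ W).card = U.card := by
    rw [Finset.card_sdiff_add_card_inter]
  have h1 : (U \ W).card ≤ (citers B G \ W).card :=
    card_le_card (sdiff_subset_sdiff hUc (le_refl W))
  set p : V → Finset V := fun u => if hh : ∃ R, R ∈ 𝒬' ∧ u ∈ R then hh.choose else ∅ with hp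
  have hpmem : ∀ u ∈ U ∩ W, p u ∈ 𝒬' ∧ u ∈ p u := by
    intro u hu
    rw [mem_inter] at hu
    have hex : ∃ R, R ∈ 𝒬' ∧ u ∈ R := (hpart.2.2 u hu.2).exists
    simp only [hp, dif_pos hex]
    exact hex.choose_spec
  have h2 : (U ∩ W).card ≤ ((𝒬'.erase G).filter fun P' => (citers B G ∩ P').Nonempty).card := by
    apply Finset.card_le_card_of_injOn p
    · intro u hu
      obtain ⟨h𝒬, hup⟩ := hpmem u hu
      have huU : u ∈ U := mem_of_mem_inter_left hu
      refine mem_filter.2 ⟨mem_erase.2 ⟨?_, h𝒬⟩, ⟨u, mem_inter.2 ⟨hUc huU, hup⟩⟩⟩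
      intro he
      exact hUG u huU (he ▸ hup)
    · intro u₁ h₁ u₂ h₂ heq
      simp only [Finset.mem_coe] at h₁ h₂
      obtain ⟨hq₁, hu₁⟩ := hpmem u₁ h₁
      obtain ⟨hq₂, hu₂⟩ := hpmem u₂ h₂
      exact hinj u₁ (mem_of_mem_inter_left h₁) u₂ (mem_of_mem_inter_left h₂) (p u₂) hq₂
        (heq ▸ hu₁) hu₂
  unfold mcites
  omega

/- ==================== assembly ==================== -/

lemma assemble {W : Finset V} {𝒬 : Finset (Finset V)} (hpart : IsPartition W 𝒬)
    {h : ℕ} (hh : 1 ≤ h) {T : Finset (Finset V)} (hT𝒬 : T ⊆ 𝒬) (hTcard : T.card = h)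
    {Gf : Finset V → Finset V} {μ' : Finset (Finset V) → Finset V → ℕ}
    (hsubW : ∀ P ∈ T, Gf P ⊆ W) (hne : ∀ P ∈ T, (Gf P).Nonempty)
    (hdisj : ∀ P ∈ T, ∀ Q ∈ T, ∀ x, x ∈ Gf P → x ∈ Gf Q → P = Q)
    (hgood : ∀ P ∈ T, h ≤ μ' (comp W (T.image Gf)) (Gf P)) :
    ∃ 𝒬', IsPartition W 𝒬' ∧ h ≤ hindex 𝒬' (μ' 𝒬') := by
  classical
  set 𝒢 := T.image Gf with h𝒢
  have h𝒢sub : ∀ G ∈ 𝒢, G ⊆ W := by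
    intro G hG
    obtain ⟨P, hP, rfl⟩ := mem_image.1 hG
    exact hsubW P hP
  have h𝒢ne : ∀ G ∈ 𝒢, G.Nonempty := by
    intro G hG
    obtain ⟨P, hP, rfl⟩ := mem_image.1 hG
    exact hne P hP
  have h𝒢disj : ∀ G ∈ 𝒢, ∀ G' ∈ 𝒢, ∀ x, x ∈ G → x ∈ G' → G = G' := by
    intro G hG G' hG' x hx hx'
    obtain ⟨P, hP, rfl⟩ := mem_image.1 hG
    obtain ⟨Q, hQ, rfl⟩ := mem_image.1 hG'
    rw [hdisj P hP Q hQ x hx hx']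
  have hp : IsPartition W (comp W 𝒢) := comp_isPartition h𝒢sub h𝒢ne h𝒢disj
  refine ⟨comp W 𝒢, hp, ?_⟩
  rw [hindex_ge_iff]
  have hinj : Set.InjOn Gf T := by
    intro P hP Q hQ heq
    simp only [Finset.mem_coe] at hP hQ
    obtain ⟨x, hx⟩ := hne P hP
    exact hdisj P hP Q hQ x hx (heq ▸ hx)
  have h𝒢card : 𝒢.card = h := by rw [h𝒢, card_image_of_injOn hinj, hTcard]
  have : 𝒢 ⊆ (comp W 𝒢).filter fun P => h ≤ μ' (comp W 𝒢) P := by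
    intro G hG
    obtain ⟨P, hP, rfl⟩ := mem_image.1 hG
    exact mem_filter.2 ⟨subset_comp (mem_image_of_mem Gf hP), hgood P hP⟩
  calc h = 𝒢.card := h𝒢card.symm
    _ ≤ _ := card_le_card this
/- ==================== fresh elements ==================== -/

lemma fresh_card_ge {W C : Finset V} {v w : V} {A : Finset (V × V)} {k : ℕ}
    (hmany : k < ((W \ C).filter fun x => (v, x) ∈ A).card) :
    k ≤ ((W \ C).filter fun x => (v, x) ∈ A.erase (v, w)).card := by
  classical
  have hsub : ((W \ C).filter fun x => (v, x) ∈ A) ⊆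
      insert w ((W \ C).filter fun x => (v, x) ∈ A.erase (v, w)) := by
    intro x hx
    rw [mem_filter] at hx
    by_cases hxw : x = w
    · exact hxw ▸ mem_insert_self _ _
    · refine mem_insert_of_mem (mem_filter.2 ⟨hx.1, mem_erase_arc.2 ⟨hx.2, fun he => ?_⟩⟩)
      rw [Prod.mk.injEq] at he
      exact hxw he.2
  have h1 := card_le_card hsub
  have h2 := card_insert_le w ((W \ C).filter fun x => (v, x) ∈ A.erase (v, w))
  omega

lemma nonempty_of_scites {B : Finset (V × V)} {S : Finset V} (h1 : 1 ≤ scites B S) :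
    S.Nonempty := by
  rw [nonempty_iff_ne_empty]
  rintro rfl
  simp [scites] at h1

lemma nonempty_of_ucites {B : Finset (V × V)} {S : Finset V} (h1 : 1 ≤ ucites B S) :
    S.Nonempty := by
  rw [nonempty_iff_ne_empty]
  rintro rfl
  simp [ucites, citers] at h1

lemma union_singleton_eq_insert (s : Finset V) (a : V) : s ∪ {a} = insert a s := by
  ext y
  simp [or_comm]

/- ==================== scites: hard direction ==================== -/

lemma scites_hard {A : Finset (V × V)} {W C : Finset V} {h : ℕ} (hh : 1 ≤ h) {v w : V}
    (hmany : 2 * h ^ 2 + 2 * h < ((W \ C).filter fun x => (v, x) ∈ A).card)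
    {𝒬 : Finset (Finset V)} (hpart : IsPartition W 𝒬)
    (hge : h ≤ hindex 𝒬 (scites A)) :
    ∃ 𝒬', IsPartition W 𝒬' ∧ h ≤ hindex 𝒬' (scites (A.erase (v, w))) := by
  classical
  set A' := A.erase (v, w) with hA'
  set D := (W \ C).filter (fun x => (v, x) ∈ A') with hDdef
  have hD : 2 * h ^ 2 + 2 * h ≤ D.card := fresh_card_ge hmany
  rw [hindex_ge_iff] at hge
  obtain ⟨T, hT𝒬', hTcard⟩ := exists_subset_card_eq hge
  have hT𝒬 : T ⊆ 𝒬 := fun P hP => mem_of_mem_filter _ (hT𝒬' hP)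
  have hTgood : ∀ P ∈ T, h ≤ scites A P := fun P hP => (mem_filter.1 (hT𝒬' hP)).2
  have hex : ∀ P : Finset V, ∃ S, P ∈ T → S ⊆ P ∧ S.card ≤ h ∧
      (w ∉ P → h ≤ scites A' S) ∧ (w ∈ P → h - 1 ≤ scites A' S) := by
    intro P
    by_cases hP : P ∈ T
    · by_cases hwP : w ∈ P
      · have h1 : h - 1 ≤ scites A' P := by
          have h2 := scites_le_erase_add_one (A := A) (v := v) (w := w) P
          have h3 := hTgood P hP
          rw [← hA'] at h2
          omega
        obtain ⟨S, hS1, hS2, hS3⟩ := scites_extract h1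
        exact ⟨S, fun _ => ⟨hS1, le_trans hS2 (by omega), fun hc => absurd hwP hc,
          fun _ => hS3⟩⟩
      · have h1 : h ≤ scites A' P := by
          rw [hA', scites_erase_eq hwP]
          exact hTgood P hP
        obtain ⟨S, hS1, hS2, hS3⟩ := scites_extract h1
        exact ⟨S, fun _ => ⟨hS1, hS2, fun _ => hS3, fun hc => absurd hc hwP⟩⟩
    · exact ⟨∅, fun hc => absurd hc hP⟩
  choose S hS using hex
  have hblocked : (T.biUnion S).card ≤ 2 * h ^ 2 := by
    calc (T.biUnion S).card ≤ ∑ P ∈ T, (S P).card := card_biUnion_le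
      _ ≤ ∑ _P ∈ T, h := Finset.sum_le_sum fun P hP => (hS P hP).2.1
      _ = h * h := by rw [Finset.sum_const, hTcard, smul_eq_mul]
      _ ≤ 2 * h ^ 2 := by nlinarith
  have hfresh : ¬ D ⊆ T.biUnion S := by
    intro hsub
    have := card_le_card hsub
    have hhpos : 1 ≤ h := hh
    omega
  obtain ⟨w', hw'D, hw'b⟩ := Finset.not_subset.1 hfresh
  have hw'W : w' ∈ W := (mem_sdiff.1 (mem_of_mem_filter _ hw'D)).1
  have hw'A : (v, w') ∈ A' := (mem_filter.1 hw'D).2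
  have hw'S : ∀ P ∈ T, w' ∉ S P := fun P hP hc => hw'b (mem_biUnion.2 ⟨P, hP, hc⟩)
  set Gf : Finset V → Finset V := fun P => if w ∈ P then S P ∪ {w'} else S P with hGf
  have hmem : ∀ R ∈ T, ∀ y, y ∈ Gf R → y ∈ S R ∨ (y = w' ∧ w ∈ R) := by
    intro R hR y hy
    simp only [hGf] at hy
    by_cases hwR : w ∈ R
    · rw [if_pos hwR] at hy
      rcases mem_union.1 hy with h1 | h1
      · exact Or.inl h1
      · exact Or.inr ⟨mem_singleton.1 h1, hwR⟩
    · rw [if_neg hwR] at hy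
      exact Or.inl hy
  refine assemble hpart hh hT𝒬 hTcard (Gf := Gf) (μ' := fun _ => scites A') ?_ ?_ ?_ ?_
  · intro P hP y hy
    rcases hmem P hP y hy with h1 | ⟨rfl, _⟩
    · exact hpart.2.1 P (hT𝒬 hP) ((hS P hP).1 h1)
    · exact hw'W
  · intro P hP
    by_cases hwP : w ∈ P
    · exact ⟨w', by simp only [hGf, if_pos hwP]; exact mem_union_right _ (mem_singleton_self w')⟩
    · have := (hS P hP).2.2.1 hwP
      have h1 : (S P).Nonempty := nonempty_of_scites (le_trans hh this)
      obtain ⟨x, hx⟩ := h1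
      exact ⟨x, by simp only [hGf, if_neg hwP]; exact hx⟩
  · intro P hP Q hQ x hxP hxQ
    rcases hmem P hP x hxP with h1 | ⟨hxw1, hwP⟩
    · rcases hmem Q hQ x hxQ with h2 | ⟨hxw2, _⟩
      · exact parts_eq_of_mem hpart (hT𝒬 hP) (hT𝒬 hQ) ((hS P hP).1 h1) ((hS Q hQ).1 h2)
      · exact absurd (hxw2 ▸ h1) (hw'S P hP)
    · rcases hmem Q hQ x hxQ with h2 | ⟨-, hwQ⟩
      · exact absurd (hxw1 ▸ h2) (hw'S Q hQ)
      · exact parts_eq_of_mem hpart (hT𝒬 hP) (hT𝒬 hQ) hwP hwQ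
  · intro P hP
    show h ≤ scites A' (Gf P)
    by_cases hwP : w ∈ P
    · have hGfP : Gf P = insert w' (S P) := by
        simp only [hGf, if_pos hwP, union_singleton_eq_insert]
      rw [hGfP]
      unfold scites
      rw [Finset.sum_insert (hw'S P hP)]
      have h1 := one_le_indeg hw'A
      have h2 := (hS P hP).2.2.2 hwP
      unfold scites at h2
      omega
    · have hGfP : Gf P = S P := by simp only [hGf, if_neg hwP]
      rw [hGfP]
      exact (hS P hP).2.2.1 hwP

/- ==================== ucites: hard direction ==================== -/

lemma ucites_hard {A : Finset (V × V)} {W C : Finset V} {h : ℕ} (hh : 1 ≤ h) {v w : V}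
    (hmany : 2 * h ^ 2 + 2 * h < ((W \ C).filter fun x => (v, x) ∈ A).card)
    {𝒬 : Finset (Finset V)} (hpart : IsPartition W 𝒬)
    (hge : h ≤ hindex 𝒬 (ucites A)) :
    ∃ 𝒬', IsPartition W 𝒬' ∧ h ≤ hindex 𝒬' (ucites (A.erase (v, w))) := by
  classical
  haveI : Nonempty V := ⟨v⟩
  set A' := A.erase (v, w) with hA'
  set D := (W \ C).filter (fun x => (v, x) ∈ A') with hDdef
  have hD : 2 * h ^ 2 + 2 * h ≤ D.card := fresh_card_ge hmany
  rw [hindex_ge_iff] at hge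
  obtain ⟨T, hT𝒬', hTcard⟩ := exists_subset_card_eq hge
  have hT𝒬 : T ⊆ 𝒬 := fun P hP => mem_of_mem_filter _ (hT𝒬' hP)
  have hTgood : ∀ P ∈ T, h ≤ ucites A P := fun P hP => (mem_filter.1 (hT𝒬' hP)).2
  have hex : ∀ P : Finset V, ∃ S, P ∈ T → S ⊆ P ∧ S.card ≤ h ∧
      (w ∉ P → h ≤ ucites A' S) ∧
      (w ∈ P → ∀ x, (v, x) ∈ A' → h ≤ ucites A' (S ∪ {x})) := by
    intro P
    by_cases hP : P ∈ T
    · by_cases hwP : w ∈ P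
      · by_cases hvc : v ∈ citers A' P
        · have h1 : h ≤ ucites A' P :=
            le_trans (hTgood P hP) (ucites_erase_eq_of_mem_citers hvc)
          obtain ⟨S, hS1, hS2, hS3⟩ := ucites_extract h1
          have key : ∀ x, (v, x) ∈ A' → h ≤ ucites A' (S ∪ {x}) := by
            intro x _
            exact le_trans hS3 (card_le_card (citers_mono_right subset_union_left))
          exact ⟨S, fun _ => ⟨hS1, hS2, fun hc => absurd hwP hc, fun _ => key⟩⟩
        · have h1 : h - 1 ≤ ucites A' P := by
            have h2 := ucites_le_erase_add_one (A := A) (v := v) (w := w) P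
            have h3 := hTgood P hP
            rw [← hA'] at h2
            omega
          obtain ⟨S, hS1, hS2, hS3⟩ := ucites_extract h1
          have key : ∀ x, (v, x) ∈ A' → h ≤ ucites A' (S ∪ {x}) := by
            intro x hx
            have hvS : v ∉ citers A' S := fun hc => hvc (citers_mono_right hS1 hc)
            have hsub : insert v (citers A' S) ⊆ citers A' (S ∪ {x}) := by
              intro u hu
              rcases mem_insert.1 hu with hu' | hu'
              · rw [hu']
                exact mem_citers.2 ⟨x, mem_union_right _ (mem_singleton_self x), hx⟩
              · exact citers_mono_right subset_union_left hu'
            have h4 := card_le_card hsub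
            rw [card_insert_of_notMem hvS] at h4
            unfold ucites at hS3 ⊢
            omega
          exact ⟨S, fun _ => ⟨hS1, le_trans hS2 (by omega), fun hc => absurd hwP hc,
            fun _ => key⟩⟩
      · have h1 : h ≤ ucites A' P := by
          rw [hA', ucites_erase_eq hwP]
          exact hTgood P hP
        obtain ⟨S, hS1, hS2, hS3⟩ := ucites_extract h1
        exact ⟨S, fun _ => ⟨hS1, hS2, fun _ => hS3, fun hc => absurd hc hwP⟩⟩
    · exact ⟨∅, fun hc => absurd hc hP⟩
  choose S hS using hex
  have hblocked : (T.biUnion S).card ≤ 2 * h ^ 2 := by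
    calc (T.biUnion S).card ≤ ∑ P ∈ T, (S P).card := card_biUnion_le
      _ ≤ ∑ _P ∈ T, h := Finset.sum_le_sum fun P hP => (hS P hP).2.1
      _ = h * h := by rw [Finset.sum_const, hTcard, smul_eq_mul]
      _ ≤ 2 * h ^ 2 := by nlinarith
  have hfresh : ¬ D ⊆ T.biUnion S := by
    intro hsub
    have := card_le_card hsub
    omega
  obtain ⟨w', hw'D, hw'b⟩ := Finset.not_subset.1 hfresh
  have hw'W : w' ∈ W := (mem_sdiff.1 (mem_of_mem_filter _ hw'D)).1
  have hw'A : (v, w') ∈ A' := (mem_filter.1 hw'D).2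
  have hw'S : ∀ P ∈ T, w' ∉ S P := fun P hP hc => hw'b (mem_biUnion.2 ⟨P, hP, hc⟩)
  set Gf : Finset V → Finset V := fun P => if w ∈ P then S P ∪ {w'} else S P with hGf
  have hmem : ∀ R ∈ T, ∀ y, y ∈ Gf R → y ∈ S R ∨ (y = w' ∧ w ∈ R) := by
    intro R hR y hy
    simp only [hGf] at hy
    by_cases hwR : w ∈ R
    · rw [if_pos hwR] at hy
      rcases mem_union.1 hy with h1 | h1
      · exact Or.inl h1
      · exact Or.inr ⟨mem_singleton.1 h1, hwR⟩
    · rw [if_neg hwR] at hy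
      exact Or.inl hy
  refine assemble hpart hh hT𝒬 hTcard (Gf := Gf) (μ' := fun _ => ucites A') ?_ ?_ ?_ ?_
  · intro P hP y hy
    rcases hmem P hP y hy with h1 | ⟨rfl, _⟩
    · exact hpart.2.1 P (hT𝒬 hP) ((hS P hP).1 h1)
    · exact hw'W
  · intro P hP
    by_cases hwP : w ∈ P
    · exact ⟨w', by simp only [hGf, if_pos hwP]; exact mem_union_right _ (mem_singleton_self w')⟩
    · have := (hS P hP).2.2.1 hwP
      have h1 : (S P).Nonempty := nonempty_of_ucites (le_trans hh this)
      obtain ⟨x, hx⟩ := h1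
      exact ⟨x, by simp only [hGf, if_neg hwP]; exact hx⟩
  · intro P hP Q hQ x hxP hxQ
    rcases hmem P hP x hxP with h1 | ⟨hxw1, hwP⟩
    · rcases hmem Q hQ x hxQ with h2 | ⟨hxw2, _⟩
      · exact parts_eq_of_mem hpart (hT𝒬 hP) (hT𝒬 hQ) ((hS P hP).1 h1) ((hS Q hQ).1 h2)
      · exact absurd (hxw2 ▸ h1) (hw'S P hP)
    · rcases hmem Q hQ x hxQ with h2 | ⟨-, hwQ⟩
      · exact absurd (hxw1 ▸ h2) (hw'S Q hQ)
      · exact parts_eq_of_mem hpart (hT𝒬 hP) (hT𝒬 hQ) hwP hwQ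
  · intro P hP
    show h ≤ ucites A' (Gf P)
    by_cases hwP : w ∈ P
    · have hGfP : Gf P = S P ∪ {w'} := by simp only [hGf, if_pos hwP]
      rw [hGfP]
      exact (hS P hP).2.2.2 hwP w' hw'A
    · have hGfP : Gf P = S P := by simp only [hGf, if_neg hwP]
      rw [hGfP]
      exact (hS P hP).2.2.1 hwP
/- ==================== mcites: hard direction ==================== -/

lemma nonempty_of_citers {B : Finset (V × V)} {S : Finset V}
    (h1 : (citers B S).Nonempty) : S.Nonempty := by
  obtain ⟨u, hu⟩ := h1
  obtain ⟨x, hx, -⟩ := mem_citers.1 hu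
  exact ⟨x, hx⟩

lemma mcites_hard {A : Finset (V × V)} {W C : Finset V} {h : ℕ} (hh : 1 ≤ h) {v w : V}
    (hv : v ∈ C)
    (hmany : 2 * h ^ 2 + 2 * h < ((W \ C).filter fun x => (v, x) ∈ A).card)
    {𝒬 : Finset (Finset V)} (hpart : IsPartition W 𝒬)
    (hge : h ≤ hindex 𝒬 (mcites A W 𝒬)) :
    ∃ 𝒬', IsPartition W 𝒬' ∧ h ≤ hindex 𝒬' (mcites (A.erase (v, w)) W 𝒬') := by
  classical
  haveI : Nonempty V := ⟨v⟩
  set A' := A.erase (v, w) with hA'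
  set D := (W \ C).filter (fun x => (v, x) ∈ A') with hDdef
  have hD : 2 * h ^ 2 + 2 * h ≤ D.card := fresh_card_ge hmany
  rw [hindex_ge_iff] at hge
  obtain ⟨T, hT𝒬', hTcard⟩ := exists_subset_card_eq hge
  have hT𝒬 : T ⊆ 𝒬 := fun P hP => mem_of_mem_filter _ (hT𝒬' hP)
  have hTgood : ∀ P ∈ T, h ≤ mcites A W 𝒬 P := fun P hP => (mem_filter.1 (hT𝒬' hP)).2
  have hex : ∀ P : Finset V, ∃ S U, P ∈ T → S ⊆ P ∧ S.card ≤ h ∧ U.card ≤ h ∧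
      U ⊆ citers A' S ∧ (∀ u ∈ U, u ∉ P) ∧
      (∀ u₁ ∈ U, ∀ u₂ ∈ U, ∀ Q ∈ 𝒬, u₁ ∈ Q → u₂ ∈ Q → u₁ = u₂) ∧
      (w ∉ P → h ≤ U.card) ∧
      (w ∈ P → h ≤ U.card ∨ (h - 1 ≤ U.card ∧ v ∉ U ∧ v ∉ P ∧
        (v ∈ W → ∃ R ∈ 𝒬, v ∈ R ∧ ∀ u ∈ U, u ∉ R))) := by
    intro P
    by_cases hP : P ∈ T
    · by_cases hwP : w ∈ P
      · by_cases hd : h ≤ mcites A' W 𝒬 P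
        · obtain ⟨S, U, h1, h2, h3, h4, h5, h6⟩ := mcites_extract hpart (hT𝒬 hP) hd
          exact ⟨S, U, fun _ => ⟨h1, h2, le_of_eq h3, h4, h5, h6,
            fun hc => absurd hwP hc, fun _ => Or.inl (le_of_eq h3.symm)⟩⟩
        · have hdrop : mcites A' W 𝒬 P < mcites A W 𝒬 P :=
            lt_of_lt_of_le (not_le.1 hd) (hTgood P hP)
          obtain ⟨hda, hdb⟩ := mcites_erase_drop hpart hdrop
          have h1 : h - 1 ≤ mcites A' W 𝒬 P := by
            have h2 := mcites_le_erase_add_one (A := A) (v := v) (w := w) hpart P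
            have h3 := hTgood P hP
            rw [← hA'] at h2
            omega
          obtain ⟨S, U, h1', h2, h3, h4, h5, h6⟩ := mcites_extract hpart (hT𝒬 hP) h1
          have hUP : U ⊆ citers A' P := fun u hu => citers_mono_right h1' (h4 hu)
          have hvU : v ∉ U := fun hc => hda (hUP hc)
          have hvP : v ∉ P := by
            by_cases hvW : v ∈ W
            · obtain ⟨R, hR𝒬, hvR, hRP, -⟩ := hdb hvW
              intro hc
              exact hRP (parts_eq_of_mem hpart hR𝒬 (hT𝒬 hP) hvR hc)
            · exact fun hc => hvW (hpart.2.1 P (hT𝒬 hP) hc)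
          refine ⟨S, U, fun _ => ⟨h1', le_trans h2 (by omega), le_trans (le_of_eq h3) (by omega),
            h4, h5, h6, fun hc => absurd hwP hc, fun _ => Or.inr ⟨le_of_eq h3.symm, hvU, hvP, ?_⟩⟩⟩
          intro hvW
          obtain ⟨R, hR𝒬, hvR, -, hRcit⟩ := hdb hvW
          exact ⟨R, hR𝒬, hvR, fun u hu => hRcit u (hUP hu)⟩
      · have hd : h ≤ mcites A' W 𝒬 P := by
          rw [hA', mcites_erase_eq hwP]
          exact hTgood P hP
        obtain ⟨S, U, h1, h2, h3, h4, h5, h6⟩ := mcites_extract hpart (hT𝒬 hP) hd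
        exact ⟨S, U, fun _ => ⟨h1, h2, le_of_eq h3, h4, h5, h6,
          fun _ => le_of_eq h3.symm, fun hc => absurd hc hwP⟩⟩
    · exact ⟨∅, ∅, fun hc => absurd hc hP⟩
  choose S U hSU using hex
  have hblocked : (T.biUnion S ∪ T.biUnion U).card ≤ 2 * h ^ 2 := by
    have hB1 : (T.biUnion S).card ≤ h * h := by
      calc (T.biUnion S).card ≤ ∑ P ∈ T, (S P).card := card_biUnion_le
        _ ≤ ∑ _P ∈ T, h := Finset.sum_le_sum fun P hP => (hSU P hP).2.1
        _ = h * h := by rw [Finset.sum_const, hTcard, smul_eq_mul]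
    have hB2 : (T.biUnion U).card ≤ h * h := by
      calc (T.biUnion U).card ≤ ∑ P ∈ T, (U P).card := card_biUnion_le
        _ ≤ ∑ _P ∈ T, h := Finset.sum_le_sum fun P hP => (hSU P hP).2.2.1
        _ = h * h := by rw [Finset.sum_const, hTcard, smul_eq_mul]
    have := card_union_le (T.biUnion S) (T.biUnion U)
    nlinarith
  have hfresh : ¬ D ⊆ T.biUnion S ∪ T.biUnion U := by
    intro hsub
    have := card_le_card hsub
    omega
  obtain ⟨w', hw'D, hw'b⟩ := Finset.not_subset.1 hfresh
  have hw'W : w' ∈ W := (mem_sdiff.1 (mem_of_mem_filter _ hw'D)).1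
  have hw'C : w' ∉ C := (mem_sdiff.1 (mem_of_mem_filter _ hw'D)).2
  have hw'A : (v, w') ∈ A' := (mem_filter.1 hw'D).2
  have hw'S : ∀ P ∈ T, w' ∉ S P :=
    fun P hP hc => hw'b (mem_union_left _ (mem_biUnion.2 ⟨P, hP, hc⟩))
  have hw'U : ∀ P ∈ T, w' ∉ U P :=
    fun P hP hc => hw'b (mem_union_right _ (mem_biUnion.2 ⟨P, hP, hc⟩))
  have hvw' : v ≠ w' := fun he => hw'C (he ▸ hv)
  set Gf : Finset V → Finset V := fun P => if w ∈ P then S P ∪ {w'} else S P with hGf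
  have hmem : ∀ R ∈ T, ∀ y, y ∈ Gf R → y ∈ S R ∨ (y = w' ∧ w ∈ R) := by
    intro R hR y hy
    simp only [hGf] at hy
    by_cases hwR : w ∈ R
    · rw [if_pos hwR] at hy
      rcases mem_union.1 hy with h1 | h1
      · exact Or.inl h1
      · exact Or.inr ⟨mem_singleton.1 h1, hwR⟩
    · rw [if_neg hwR] at hy
      exact Or.inl hy
  have hSGf : ∀ P, S P ⊆ Gf P := by
    intro P
    simp only [hGf]
    by_cases hwP : w ∈ P
    · rw [if_pos hwP]; exact subset_union_left
    · rw [if_neg hwP]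
  have hsubW : ∀ P ∈ T, Gf P ⊆ W := by
    intro P hP y hy
    rcases hmem P hP y hy with h1 | ⟨hyw, -⟩
    · exact hpart.2.1 P (hT𝒬 hP) ((hSU P hP).1 h1)
    · exact hyw ▸ hw'W
  have hne : ∀ P ∈ T, (Gf P).Nonempty := by
    intro P hP
    by_cases hwP : w ∈ P
    · exact ⟨w', by simp only [hGf, if_pos hwP]; exact mem_union_right _ (mem_singleton_self w')⟩
    · have h7 := (hSU P hP).2.2.2.2.2.2.1 hwP
      have hUne : (U P).Nonempty := card_pos.1 (lt_of_lt_of_le hh h7)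
      obtain ⟨u, hu⟩ := hUne
      obtain ⟨x, hx⟩ := nonempty_of_citers ⟨u, (hSU P hP).2.2.2.1 hu⟩
      exact ⟨x, hSGf P hx⟩
  have hdisj : ∀ P ∈ T, ∀ Q ∈ T, ∀ x, x ∈ Gf P → x ∈ Gf Q → P = Q := by
    intro P hP Q hQ x hxP hxQ
    rcases hmem P hP x hxP with h1 | ⟨hxw1, hwP⟩
    · rcases hmem Q hQ x hxQ with h2 | ⟨hxw2, -⟩
      · exact parts_eq_of_mem hpart (hT𝒬 hP) (hT𝒬 hQ) ((hSU P hP).1 h1) ((hSU Q hQ).1 h2)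
      · exact absurd (hxw2 ▸ h1) (hw'S P hP)
    · rcases hmem Q hQ x hxQ with h2 | ⟨-, hwQ⟩
      · exact absurd (hxw1 ▸ h2) (hw'S Q hQ)
      · exact parts_eq_of_mem hpart (hT𝒬 hP) (hT𝒬 hQ) hwP hwQ
  -- the new partition
  set 𝒬' := comp W (T.image Gf) with h𝒬'
  have hp' : IsPartition W 𝒬' := by
    apply comp_isPartition
    · intro G hG
      obtain ⟨P, hP, rfl⟩ := mem_image.1 hG
      exact hsubW P hP
    · intro G hG
      obtain ⟨P, hP, rfl⟩ := mem_image.1 hG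
      exact hne P hP
    · intro G hG G' hG' x hx hx'
      obtain ⟨P, hP, rfl⟩ := mem_image.1 hG
      obtain ⟨Q, hQ, rfl⟩ := mem_image.1 hG'
      rw [hdisj P hP Q hQ x hx hx']
  -- goodness in the new partition
  have hgood : ∀ P ∈ T, h ≤ mcites A' W 𝒬' (Gf P) := by
    intro P hP
    obtain ⟨hS1, hS2, hU3, hU4, hU5, hU6, hU7, hU8⟩ := hSU P hP
    -- generic unit-validity facts
    have hUnotGf : ∀ u ∈ U P, u ∉ Gf P := by
      intro u hu hc
      rcases hmem P hP u hc with h1 | ⟨huw, -⟩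
      · exact hU5 u hu (hS1 h1)
      · exact hw'U P hP (huw ▸ hu)
    have hinjbase : ∀ u₁ ∈ U P, ∀ u₂ ∈ U P, ∀ R ∈ 𝒬', u₁ ∈ R → u₂ ∈ R → u₁ = u₂ := by
      intro u₁ h₁ u₂ h₂ R hR hu₁R hu₂R
      rcases mem_comp.1 hR with hR𝒢 | ⟨x, -, -, rfl⟩
      · obtain ⟨Q, hQ, rfl⟩ := mem_image.1 hR𝒢
        have e₁ : u₁ ∈ S Q := by
          rcases hmem Q hQ u₁ hu₁R with h1 | ⟨he, -⟩
          · exact h1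
          · exact absurd (he ▸ h₁) (hw'U P hP)
        have e₂ : u₂ ∈ S Q := by
          rcases hmem Q hQ u₂ hu₂R with h1 | ⟨he, -⟩
          · exact h1
          · exact absurd (he ▸ h₂) (hw'U P hP)
        exact hU6 u₁ h₁ u₂ h₂ Q (hT𝒬 hQ) ((hSU Q hQ).1 e₁) ((hSU Q hQ).1 e₂)
      · rw [mem_singleton] at hu₁R hu₂R
        rw [hu₁R, hu₂R]
    have hUcit : ∀ u ∈ U P, u ∈ citers A' (Gf P) :=
      fun u hu => citers_mono_right (hSGf P) (hU4 hu)
    by_cases hwP : w ∈ P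
    · rcases hU8 hwP with hbig | ⟨hcard, hvU, hvP, hvWR⟩
      · refine le_trans hbig (mcites_ge_of_units hp' hUcit hUnotGf hinjbase)
      · -- drop case: add v as an extra unit
        have hw'Gf : w' ∈ Gf P := by
          simp only [hGf, if_pos hwP]
          exact mem_union_right _ (mem_singleton_self w')
        have hvGf : v ∉ Gf P := by
          intro hc
          rcases hmem P hP v hc with h1 | ⟨he, -⟩
          · exact hvP (hS1 h1)
          · exact hvw' he
        have hvcit : v ∈ citers A' (Gf P) := mem_citers.2 ⟨w', hw'Gf, hw'A⟩
        have hUc : insert v (U P) ⊆ citers A' (Gf P) := by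
          intro u hu
          rcases mem_insert.1 hu with he | hu'
          · exact he ▸ hvcit
          · exact hUcit u hu'
        have hUG : ∀ u ∈ insert v (U P), u ∉ Gf P := by
          intro u hu
          rcases mem_insert.1 hu with he | hu'
          · exact he ▸ hvGf
          · exact hUnotGf u hu'
        have hinj : ∀ u₁ ∈ insert v (U P), ∀ u₂ ∈ insert v (U P), ∀ R ∈ 𝒬',
            u₁ ∈ R → u₂ ∈ R → u₁ = u₂ := by
          intro u₁ h₁ u₂ h₂ R hR hu₁R hu₂R
          -- first handle singleton parts
          rcases mem_comp.1 hR with hR𝒢 | ⟨x, -, -, rfl⟩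
          swap
          · rw [mem_singleton] at hu₁R hu₂R
            rw [hu₁R, hu₂R]
          obtain ⟨Q, hQ, rfl⟩ := mem_image.1 hR𝒢
          have e₁ : u₁ ∈ S Q := by
            rcases hmem Q hQ u₁ hu₁R with h1 | ⟨he, -⟩
            · exact h1
            · exfalso
              rcases mem_insert.1 h₁ with he' | hu'
              · exact hvw' (he'.symm.trans he)
              · exact hw'U P hP (he ▸ hu')
          have e₂ : u₂ ∈ S Q := by
            rcases hmem Q hQ u₂ hu₂R with h1 | ⟨he, -⟩
            · exact h1
            · exfalso
              rcases mem_insert.1 h₂ with he' | hu'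
              · exact hvw' (he'.symm.trans he)
              · exact hw'U P hP (he ▸ hu')
          have eQ₁ : u₁ ∈ Q := (hSU Q hQ).1 e₁
          have eQ₂ : u₂ ∈ Q := (hSU Q hQ).1 e₂
          rcases mem_insert.1 h₁ with he₁ | hu₁'
          · -- u₁ = v
            have hvQ : v ∈ Q := he₁ ▸ eQ₁
            have hvW : v ∈ W := hpart.2.1 Q (hT𝒬 hQ) hvQ
            obtain ⟨R₀, hR₀𝒬, hvR₀, hUR₀⟩ := hvWR hvW
            have hQR₀ : Q = R₀ := parts_eq_of_mem hpart (hT𝒬 hQ) hR₀𝒬 hvQ hvR₀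
            rcases mem_insert.1 h₂ with he₂ | hu₂'
            · exact he₁.trans he₂.symm
            · exact absurd (hQR₀ ▸ eQ₂) (hUR₀ u₂ hu₂')
          · rcases mem_insert.1 h₂ with he₂ | hu₂'
            · -- u₂ = v
              have hvQ : v ∈ Q := he₂ ▸ eQ₂
              have hvW : v ∈ W := hpart.2.1 Q (hT𝒬 hQ) hvQ
              obtain ⟨R₀, hR₀𝒬, hvR₀, hUR₀⟩ := hvWR hvW
              have hQR₀ : Q = R₀ := parts_eq_of_mem hpart (hT𝒬 hQ) hR₀𝒬 hvQ hvR₀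
              exact absurd (hQR₀ ▸ eQ₁) (hUR₀ u₁ hu₁')
            · exact hU6 u₁ hu₁' u₂ hu₂' Q (hT𝒬 hQ) eQ₁ eQ₂
        have hfinal := mcites_ge_of_units hp' hUc hUG hinj
        rw [card_insert_of_notMem hvU] at hfinal
        have : h ≤ (U P).card + 1 := by omega
        exact le_trans this hfinal
    · exact le_trans (hU7 hwP) (mcites_ge_of_units hp' hUcit hUnotGf hinjbase)
  exact assemble hpart hh hT𝒬 hTcard (Gf := Gf) (μ' := fun Q' => mcites A' W Q')
    hsubW hne hdisj hgood

/-- if every arc has an endpoint in `C`, `v ∈ C` cites more than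
`2h² + 2h` articles of `W ∖ C`, and `(v, w)` is an arc with `w ∈ W ∖ C`, then for each
`μ ∈ {scites, ucites, mcites}` a partition of `W` with H-index at least `h` exists for
`A` iff one exists for `A` with the arc `(v, w)` deleted. -/
theorem stmt11 (A : Finset (V × V)) (W : Finset V) (h : ℕ) (hh : 1 ≤ h)
    (C : Finset V) (hC : ∀ a ∈ A, a.1 ∈ C ∨ a.2 ∈ C)
    (v : V) (hv : v ∈ C)
    (hmany : 2 * h ^ 2 + 2 * h < ((W \ C).filter fun w => (v, w) ∈ A).card)
    (w : V) (hw : w ∈ W \ C) (hvw : (v, w) ∈ A)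
    (μ : Finset (V × V) → Finset (Finset V) → Finset V → ℕ)
    (hμ : μ = (fun A' _ => scites A') ∨ μ = (fun A' _ => ucites A') ∨
      μ = (fun A' => mcites A' W)) :
    (∃ 𝒬, IsPartition W 𝒬 ∧ h ≤ hindex 𝒬 (μ A 𝒬)) ↔
      (∃ 𝒬, IsPartition W 𝒬 ∧ h ≤ hindex 𝒬 (μ (A.erase (v, w)) 𝒬)) := by
  have hsub : A.erase (v, w) ⊆ A := erase_subset _ _
  constructor
  · rintro ⟨𝒬, hpart, hge⟩
    rcases hμ with rfl | rfl | rfl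
    · exact scites_hard hh hmany hpart hge
    · exact ucites_hard hh hmany hpart hge
    · exact mcites_hard hh hv hmany hpart hge
  · rintro ⟨𝒬, hpart, hge⟩
    refine ⟨𝒬, hpart, le_trans hge (hindex_mono_mu ?_)⟩
    rcases hμ with rfl | rfl | rfl
    · exact fun P _ => scites_mono hsub P
    · exact fun P _ => ucites_mono hsub P
    · exact fun P _ => mcites_mono hsub W 𝒬 P
end

section
/- Let h ≥ 1 and let D = (V, A) be a citation graph with own articles W ⊆ V satisfying all of the following: (i) there is a set C ⊆ V with |C| ≤ 2h² such that every arc of A has at least one endpoint in C; (ii) every article of C cites at most 2h² + 2h articles of W ∖ C; (iii) at most h − 1 articles of W have at least h citing articles in V ∖ W; (iv) every article of W has at most h citing articles in V ∖ W; (v) every article of W has at least one citing article; and (vi) every article of V ∖ (W ∪ C) cites at least one article of W. Then |V| ≤ 4h⁴ + 6h³ + 5h². -/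
open Finset

variable {V : Type*} [Fintype V] [DecidableEq V]

/-- kernel size bound. Under conditions (i)–(vi), the citation graph has
at most `4h⁴ + 6h³ + 5h²` articles. -/
theorem stmt13 (A : Finset (V × V)) (W : Finset V) (h : ℕ) (hh : 1 ≤ h)
    (C : Finset V)
    -- (i) C is a vertex cover of size at most 2h²
    (hCcard : C.card ≤ 2 * h ^ 2)
    (hcover : ∀ a ∈ A, a.1 ∈ C ∨ a.2 ∈ C)
    -- (ii) every article of C cites at most 2h² + 2h articles of W ∖ C
    (hout : ∀ c ∈ C, ((W \ C).filter fun w => (c, w) ∈ A).card ≤ 2 * h ^ 2 + 2 * h)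
    -- (iii) at most h − 1 articles of W have at least h citing articles in V ∖ W
    (hfew : (W.filter fun w =>
      h ≤ (Finset.univ.filter fun u => u ∉ W ∧ (u, w) ∈ A).card).card ≤ h - 1)
    -- (iv) every article of W has at most h citing articles in V ∖ W
    (hbound : ∀ w ∈ W, (Finset.univ.filter fun u => u ∉ W ∧ (u, w) ∈ A).card ≤ h)
    -- (v) every article of W has at least one citing article
    (hcited : ∀ w ∈ W, ∃ u, (u, w) ∈ A)
    -- (vi) every article of V ∖ (W ∪ C) cites at least one article of W
    (hcites : ∀ u, u ∉ W → u ∉ C → ∃ w ∈ W, (u, w) ∈ A) :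
    Fintype.card V ≤ 4 * h ^ 4 + 6 * h ^ 3 + 5 * h ^ 2 := by
  classical
  have h1 : (W \ C) ⊆ C.biUnion (fun c => (W \ C).filter fun w => (c, w) ∈ A) := by
    intro w hw
    have hw' := mem_sdiff.mp hw
    obtain ⟨u, hu⟩ := hcited w hw'.1
    have hc : u ∈ C := by
      rcases hcover (u, w) hu with h' | h'
      · exact h'
      · exact absurd h' hw'.2
    exact mem_biUnion.mpr ⟨u, hc, mem_filter.mpr ⟨hw, hu⟩⟩
  have b1 : (W \ C).card ≤ C.card * (2 * h ^ 2 + 2 * h) := by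
    calc (W \ C).card ≤ _ := card_le_card h1
      _ ≤ ∑ c ∈ C, ((W \ C).filter fun w => (c, w) ∈ A).card := card_biUnion_le
      _ ≤ ∑ _c ∈ C, (2 * h ^ 2 + 2 * h) := sum_le_sum (fun c hc => hout c hc)
      _ = _ := by rw [sum_const, smul_eq_mul]
  set R := univ.filter (fun u : V => u ∉ W ∧ u ∉ C) with hR
  have h2 : R ⊆ (W ∩ C).biUnion
      (fun w => univ.filter fun u => u ∉ W ∧ (u, w) ∈ A) := by
    intro u hu
    simp only [hR, mem_filter, mem_univ, true_and] at hu
    obtain ⟨w, hw, haw⟩ := hcites u hu.1 hu.2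
    have hwC : w ∈ C := by
      rcases hcover (u, w) haw with h' | h'
      · exact absurd h' hu.2
      · exact h'
    exact mem_biUnion.mpr ⟨w, mem_inter.mpr ⟨hw, hwC⟩,
      mem_filter.mpr ⟨mem_univ u, hu.1, haw⟩⟩
  have b2 : R.card ≤ (2 * h ^ 2) * h := by
    calc R.card ≤ _ := card_le_card h2
      _ ≤ ∑ w ∈ W ∩ C, (univ.filter fun u => u ∉ W ∧ (u, w) ∈ A).card :=
        card_biUnion_le
      _ ≤ ∑ _w ∈ W ∩ C, h := sum_le_sum (fun w hw => hbound w (mem_inter.mp hw).1)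
      _ = (W ∩ C).card * h := by rw [sum_const, smul_eq_mul]
      _ ≤ (2 * h ^ 2) * h :=
        Nat.mul_le_mul_right h (le_trans (card_le_card inter_subset_right) hCcard)
  have hcov : (univ : Finset V) ⊆ (W \ C) ∪ C ∪ R := by
    intro u _
    by_cases hW : u ∈ W <;> by_cases hC : u ∈ C <;>
      simp [hR, hW, hC, mem_union, mem_sdiff, mem_filter]
  have hmain : Fintype.card V ≤ (W \ C).card + C.card + R.card := by
    calc Fintype.card V = (univ : Finset V).card := card_univ.symm
      _ ≤ ((W \ C) ∪ C ∪ R).card := card_le_card hcov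
      _ ≤ ((W \ C) ∪ C).card + R.card := card_union_le _ _
      _ ≤ (W \ C).card + C.card + R.card :=
        Nat.add_le_add_right (card_union_le _ _) _
  nlinarith [hmain, b1, b2, hCcard, Nat.one_le_iff_ne_zero.mp hh]
end

section
/- Let h ≥ 0, let 𝒫 be a partition of W, let P ∈ 𝒫 with |P| ≥ 2, and let v ∈ P be an article with indeg(v) ≥ h. Then the partition 𝒫' obtained from 𝒫 by replacing P with the two parts P ∖ {v} and {v} satisfies |{Q ∈ 𝒫' : scites(Q) ≥ h}| ≥ |{Q ∈ 𝒫 : scites(Q) ≥ h}|; that is, splitting off an article with at least h citations never decreases the number of parts with at least h citations under the measure scites. -/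
open Finset

variable {V : Type*} [Fintype V] [DecidableEq V]

/-- splitting off an article with at least `h` citations from a part of
size at least two never decreases the number of parts with `scites`-value at least `h`. -/
theorem stmt14 (A : Finset (V × V)) (W : Finset V) (h : ℕ)
    (𝒬 : Finset (Finset V)) (hP : IsPartition W 𝒬)
    (P : Finset V) (hPm : P ∈ 𝒬) (hP2 : 2 ≤ P.card)
    (v : V) (hv : v ∈ P) (hdeg : h ≤ indeg A v)
    (𝒬' : Finset (Finset V))
    (h𝒬' : 𝒬' = insert (P.erase v) (insert {v} (𝒬.erase P))) :
    (𝒬.filter fun Q => h ≤ scites A Q).card ≤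
      (𝒬'.filter fun Q => h ≤ scites A Q).card := by
  classical
  set f : Finset V → Prop := fun Q => h ≤ scites A Q with hf
  obtain ⟨_, hsub, huniq⟩ := hP
  have hvW : v ∈ W := hsub P hPm hv
  -- {v} is not in 𝒬.erase P
  have hvS : ({v} : Finset V) ∉ 𝒬.erase P := by
    intro hmem
    obtain ⟨hne, hmem𝒬⟩ := Finset.mem_erase.mp hmem
    obtain ⟨Q, _, hQu⟩ := huniq v hvW
    exact hne ((hQu {v} ⟨hmem𝒬, Finset.mem_singleton_self v⟩).trans
      (hQu P ⟨hPm, hv⟩).symm)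
  -- scites of {v} is at least h
  have hfv : f {v} := by
    simpa [hf, scites] using hdeg
  -- LHS bound
  have h1 : (𝒬.filter f).card ≤ ((𝒬.erase P).filter f).card + 1 := by
    have : 𝒬 = insert P (𝒬.erase P) := (Finset.insert_erase hPm).symm
    calc (𝒬.filter f).card = ((insert P (𝒬.erase P)).filter f).card := by rw [← this]
      _ ≤ (insert P ((𝒬.erase P).filter f)).card := by
          apply Finset.card_le_card
          intro Q hQ
          rw [Finset.mem_filter, Finset.mem_insert] at hQ
          rcases hQ with ⟨hQ1 | hQ1, hQ2⟩
          · exact Finset.mem_insert.mpr (Or.inl hQ1)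
          · exact Finset.mem_insert.mpr (Or.inr (Finset.mem_filter.mpr ⟨hQ1, hQ2⟩))
      _ ≤ ((𝒬.erase P).filter f).card + 1 := Finset.card_insert_le _ _
  -- RHS bound
  have h2 : ((𝒬.erase P).filter f).card + 1 ≤ (𝒬'.filter f).card := by
    have hsub2 : insert {v} ((𝒬.erase P).filter f) ⊆ 𝒬'.filter f := by
      intro Q hQ
      rw [Finset.mem_insert] at hQ
      rcases hQ with rfl | hQ
      · exact Finset.mem_filter.mpr ⟨by simp [h𝒬'], hfv⟩
      · rw [Finset.mem_filter] at hQ ⊢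
        exact ⟨by simp [h𝒬', hQ.1], hQ.2⟩
    have hnm : ({v} : Finset V) ∉ (𝒬.erase P).filter f :=
      fun hmem => hvS (Finset.mem_filter.mp hmem).1
    calc ((𝒬.erase P).filter f).card + 1
        = (insert {v} ((𝒬.erase P).filter f)).card :=
          (Finset.card_insert_of_notMem hnm).symm
      _ ≤ (𝒬'.filter f).card := Finset.card_le_card hsub2
  exact h1.trans h2
end

section
/- Let H be a finite simple undirected graph and ℓ ≥ 1. Construct a citation graph D and compatibility graph G as follows: the own articles are W = W_< ∪ W_≥, where W_< = V(H) and W_≥ is a set of ℓ − 1 new articles; for each article w ∈ W_≥ there are ℓ distinct external articles (outside W, all pairwise distinct) each citing only w; for each article w ∈ W_< there is one distinct external article citing only w; there are no other arcs. The compatibility graph G restricted to W_< equals H, and the articles of W_≥ are isolated vertices of G. Then the following are equivalent: (a) H contains a clique of size ℓ; (b) there is a partition of W complying with G with H-index at least ℓ with respect to scites; (c) there is a partition of W complying with G with H-index at least ℓ with respect to scites that performs at most ℓ − 1 merges. -/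
open Finset

variable {V : Type*} [Fintype V] [DecidableEq V]

/-- the clique reduction. `W = Wlt ∪ Wge` with `|Wge| = ℓ − 1`; every
article of `Wge` has `ℓ` citations and every article of `Wlt` has one citation, all from
pairwise distinct external articles each citing only one own article; the compatibility
graph `G` restricted to `Wlt` is the input graph `H` (so cliques of `H` are cliques of
`G` inside `Wlt`) and the articles of `Wge` are isolated in `G`. Then: `H` has a clique
of size `ℓ` ⟺ some complying partition of `W` has H-index at least `ℓ` w.r.t. `scites`
⟺ some complying partition of `W` with at most `ℓ − 1` merges has H-index at least `ℓ`
w.r.t. `scites`. -/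
theorem stmt15 (A : Finset (V × V)) (G : SimpleGraph V)
    (Wlt Wge : Finset V) (ℓ : ℕ) (hℓ : 1 ≤ ℓ)
    (hdisj : Disjoint Wlt Wge) (hge : Wge.card = ℓ - 1)
    (harcs : ∀ a ∈ A, a.1 ∉ Wlt ∪ Wge ∧ a.2 ∈ Wlt ∪ Wge)
    (hindegge : ∀ w ∈ Wge, indeg A w = ℓ)
    (hindeglt : ∀ w ∈ Wlt, indeg A w = 1)
    (hdistinct : ∀ v ∈ Wlt ∪ Wge, ∀ v' ∈ Wlt ∪ Wge, v ≠ v' →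
      Disjoint (citers A {v}) (citers A {v'}))
    (hGiso : ∀ w ∈ Wge, ∀ u : V, ¬ G.Adj w u)
    (hGlt : ∀ a b : V, G.Adj a b → a ∈ Wlt ∧ b ∈ Wlt) :
    ((∃ S : Finset V, S ⊆ Wlt ∧ S.card = ℓ ∧
        ∀ a ∈ S, ∀ b ∈ S, a ≠ b → G.Adj a b) ↔
      (∃ 𝒬, IsPartition (Wlt ∪ Wge) 𝒬 ∧ Complies G 𝒬 ∧
        ℓ ≤ hindex 𝒬 (scites A))) ∧
    ((∃ S : Finset V, S ⊆ Wlt ∧ S.card = ℓ ∧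
        ∀ a ∈ S, ∀ b ∈ S, a ≠ b → G.Adj a b) ↔
      (∃ 𝒬, IsPartition (Wlt ∪ Wge) 𝒬 ∧ Complies G 𝒬 ∧
        ℓ ≤ hindex 𝒬 (scites A) ∧ (∑ P ∈ 𝒬, (P.card - 1)) ≤ ℓ - 1)) := by
  classical
  -- (b) → (a)
  have dir_ba : ∀ 𝒬, IsPartition (Wlt ∪ Wge) 𝒬 → Complies G 𝒬 →
      ℓ ≤ hindex 𝒬 (scites A) →
      ∃ S : Finset V, S ⊆ Wlt ∧ S.card = ℓ ∧
        ∀ a ∈ S, ∀ b ∈ S, a ≠ b → G.Adj a b := by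
    rintro 𝒬 ⟨hne, hsub, _⟩ hcomp hh
    unfold hindex at hh
    have h0 : (fun h => h ≤ (𝒬.filter fun P => h ≤ scites A P).card) 0 := Nat.zero_le _
    have hspec := Nat.findGreatest_spec (P := fun h => h ≤ (𝒬.filter fun P => h ≤ scites A P).card) (m := 0) (n := 𝒬.card) (Nat.zero_le _) h0
    have hFcard : ℓ ≤ (𝒬.filter fun P => ℓ ≤ scites A P).card :=
      le_trans hh (le_trans hspec (Finset.card_le_card
        (fun P hP => Finset.mem_filter.2 ⟨(Finset.mem_filter.1 hP).1,
          le_trans hh (Finset.mem_filter.1 hP).2⟩)))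
    set F := 𝒬.filter fun P => ℓ ≤ scites A P with hF
    have hsing : ∀ P ∈ 𝒬, ∀ w ∈ Wge, w ∈ P → P = {w} := by
      intro P hP w hw hwP
      refine Finset.eq_singleton_iff_unique_mem.2 ⟨hwP, fun u hu => ?_⟩
      by_contra hne'
      exact hGiso w hw u (hcomp P hP w hwP u hu fun h => hne' h.symm)
    set B := F.filter (fun P => (P ∩ Wge).Nonempty) with hB
    have hBsub : B ⊆ Wge.image (fun w => ({w} : Finset V)) := by
      intro P hP
      obtain ⟨w, hw⟩ := (Finset.mem_filter.1 hP).2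
      have hw1 : w ∈ P := (Finset.mem_inter.1 hw).1
      have hw2 : w ∈ Wge := (Finset.mem_inter.1 hw).2
      have hPS : P = {w} :=
        hsing P (Finset.mem_of_mem_filter P (Finset.mem_filter.1 hP).1) w hw2 hw1
      exact Finset.mem_image.2 ⟨w, hw2, hPS.symm⟩
    have hBcard : B.card ≤ ℓ - 1 := by
      calc B.card ≤ (Wge.image (fun w => ({w} : Finset V))).card :=
            Finset.card_le_card hBsub
        _ ≤ Wge.card := Finset.card_image_le
        _ = ℓ - 1 := hge
    have hnotsub : ¬ F ⊆ B := by
      intro h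
      have := Finset.card_le_card h
      omega
    obtain ⟨P, hPF, hPB⟩ := Finset.not_subset.1 hnotsub
    have hP𝒬 : P ∈ 𝒬 := Finset.mem_of_mem_filter P hPF
    have hPsc : ℓ ≤ scites A P := (Finset.mem_filter.1 hPF).2
    have hPWge : ¬ (P ∩ Wge).Nonempty := fun h => hPB (Finset.mem_filter.2 ⟨hPF, h⟩)
    have hPlt : P ⊆ Wlt := by
      intro v hv
      rcases Finset.mem_union.1 (hsub P hP𝒬 hv) with h | h
      · exact h
      · exact absurd ⟨v, Finset.mem_inter.2 ⟨hv, h⟩⟩ hPWge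
    have hPsum : scites A P = P.card := by
      unfold scites
      rw [Finset.sum_congr rfl fun v hv => hindeglt v (hPlt hv)]
      simp
    obtain ⟨S, hSP, hScard⟩ := Finset.exists_subset_card_eq (s := P) (n := ℓ) (by omega)
    exact ⟨S, hSP.trans hPlt, hScard,
      fun a ha b hb hab => hcomp P hP𝒬 a (hSP ha) b (hSP hb) hab⟩
  -- (a) → (c)
  have dir_ac : ∀ S : Finset V, S ⊆ Wlt → S.card = ℓ →
      (∀ a ∈ S, ∀ b ∈ S, a ≠ b → G.Adj a b) →
      ∃ 𝒬, IsPartition (Wlt ∪ Wge) 𝒬 ∧ Complies G 𝒬 ∧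
        ℓ ≤ hindex 𝒬 (scites A) ∧ (∑ P ∈ 𝒬, (P.card - 1)) ≤ ℓ - 1 := by
    intro S hSlt hScard hSclique
    set R := (Wlt ∪ Wge) \ S with hR
    set 𝒬 := insert S (R.image fun v => ({v} : Finset V)) with h𝒬
    have hSsub : S ⊆ Wlt ∪ Wge := hSlt.trans Finset.subset_union_left
    have hSne : S.Nonempty := Finset.card_pos.1 (by omega)
    have hmem𝒬 : ∀ P ∈ 𝒬, P = S ∨ ∃ v ∈ R, P = {v} := by
      intro P hP
      rcases Finset.mem_insert.1 hP with h | h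
      · exact Or.inl h
      · obtain ⟨v, hv, rfl⟩ := Finset.mem_image.1 h
        exact Or.inr ⟨v, hv, rfl⟩
    have hSnotimg : S ∉ R.image fun v => ({v} : Finset V) := by
      intro h
      obtain ⟨v, hv, hveq⟩ := Finset.mem_image.1 h
      have : v ∈ S := by rw [← hveq]; exact Finset.mem_singleton_self v
      exact (Finset.mem_sdiff.1 hv).2 this
    have hSnotWge : S ∉ Wge.image fun w => ({w} : Finset V) := by
      intro h
      obtain ⟨w, hw, hveq⟩ := Finset.mem_image.1 h
      have : w ∈ S := by rw [← hveq]; exact Finset.mem_singleton_self w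
      exact Finset.disjoint_left.1 hdisj (hSlt this) hw
    have hWgeR : Wge ⊆ R := by
      intro w hw
      refine Finset.mem_sdiff.2 ⟨Finset.mem_union_right _ hw, fun hwS => ?_⟩
      exact Finset.disjoint_left.1 hdisj (hSlt hwS) hw
    -- scites values
    have hscS : scites A S = ℓ := by
      unfold scites
      rw [Finset.sum_congr rfl fun v hv => hindeglt v (hSlt hv)]
      simp [hScard]
    have hscW : ∀ w ∈ Wge, scites A ({w} : Finset V) = ℓ := by
      intro w hw
      simp [scites, hindegge w hw]
    -- the partition property
    have hpart : IsPartition (Wlt ∪ Wge) 𝒬 := by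
      refine ⟨?_, ?_, ?_⟩
      · intro P hP
        rcases hmem𝒬 P hP with rfl | ⟨v, _, rfl⟩
        · exact hSne
        · exact Finset.singleton_nonempty v
      · intro P hP
        rcases hmem𝒬 P hP with rfl | ⟨v, hv, rfl⟩
        · exact hSsub
        · exact Finset.singleton_subset_iff.2 (Finset.mem_sdiff.1 hv).1
      · intro v hv
        by_cases hvS : v ∈ S
        · refine ⟨S, ⟨Finset.mem_insert_self _ _, hvS⟩, ?_⟩
          rintro P ⟨hP, hvP⟩
          rcases hmem𝒬 P hP with rfl | ⟨u, hu, rfl⟩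
          · rfl
          · have : v = u := Finset.mem_singleton.1 hvP
            exact absurd hvS (this ▸ (Finset.mem_sdiff.1 hu).2)
        · have hvR : v ∈ R := Finset.mem_sdiff.2 ⟨hv, hvS⟩
          refine ⟨{v}, ⟨Finset.mem_insert_of_mem (Finset.mem_image_of_mem _ hvR),
            Finset.mem_singleton_self v⟩, ?_⟩
          rintro P ⟨hP, hvP⟩
          rcases hmem𝒬 P hP with rfl | ⟨u, _, rfl⟩
          · exact absurd hvP hvS
          · rw [Finset.mem_singleton.1 hvP]
    have hcomp : Complies G 𝒬 := by
      intro P hP a ha b hb hab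
      rcases hmem𝒬 P hP with rfl | ⟨v, _, rfl⟩
      · exact hSclique a ha b hb hab
      · exact absurd ((Finset.mem_singleton.1 ha).trans
          (Finset.mem_singleton.1 hb).symm) hab
    -- h-index bound
    have hT : insert S (Wge.image fun w => ({w} : Finset V)) ⊆
        𝒬.filter fun P => ℓ ≤ scites A P := by
      intro P hP
      rcases Finset.mem_insert.1 hP with rfl | h
      · exact Finset.mem_filter.2 ⟨Finset.mem_insert_self _ _, hscS.ge⟩
      · obtain ⟨w, hw, rfl⟩ := Finset.mem_image.1 h
        refine Finset.mem_filter.2 ⟨Finset.mem_insert_of_mem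
          (Finset.mem_image_of_mem _ (hWgeR hw)), (hscW w hw).ge⟩
    have hTcard : (insert S (Wge.image fun w => ({w} : Finset V))).card = ℓ := by
      rw [Finset.card_insert_of_notMem hSnotWge,
        Finset.card_image_of_injective _ Finset.singleton_injective, hge]
      omega
    have hfiltcard : ℓ ≤ (𝒬.filter fun P => ℓ ≤ scites A P).card := by
      calc ℓ = (insert S (Wge.image fun w => ({w} : Finset V))).card := hTcard.symm
        _ ≤ _ := Finset.card_le_card hT
    have hQcard : ℓ ≤ 𝒬.card :=
      le_trans hfiltcard (Finset.card_le_card (Finset.filter_subset _ _))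
    have hhind : ℓ ≤ hindex 𝒬 (scites A) :=
      Nat.le_findGreatest hQcard hfiltcard
    -- merges bound
    have hmerge : (∑ P ∈ 𝒬, (P.card - 1)) ≤ ℓ - 1 := by
      rw [h𝒬, Finset.sum_insert hSnotimg,
        Finset.sum_image (fun x _ y _ h => Finset.singleton_injective h)]
      simp [hScard]
    exact ⟨𝒬, hpart, hcomp, hhind, hmerge⟩
  constructor
  · constructor
    · rintro ⟨S, h1, h2, h3⟩
      obtain ⟨𝒬, hp, hc, hh, _⟩ := dir_ac S h1 h2 h3
      exact ⟨𝒬, hp, hc, hh⟩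
    · rintro ⟨𝒬, hp, hc, hh⟩
      exact dir_ba 𝒬 hp hc hh
  · constructor
    · rintro ⟨S, h1, h2, h3⟩
      exact dir_ac S h1 h2 h3
    · rintro ⟨𝒬, hp, hc, hh, _⟩
      exact dir_ba 𝒬 hp hc hh
end

section
/- Let H be a finite simple undirected graph with n vertices, let ℓ satisfy n > ℓ > 1, and set h = ℓn. Construct a citation graph D as follows: the own articles are W = W_< ∪ W_≥, where W_< = V(H) and W_≥ is a set of h − 1 new articles; for each w ∈ W_≥ there are h distinct external articles each citing only w; for each edge {u, v} of H there is a distinct external article e_{u,v} citing exactly u and v; for each w ∈ W_< there are additional distinct external articles each citing only w, so that every article of W_< has in-degree exactly n; there are no other arcs, and all external articles are pairwise distinct and lie outside W. Arbitrary articles of W may be merged. Then H has an independent set of size ℓ if and only if there is a partition of W performing at most ℓ − 1 merges whose H-index with respect to ucites is at least h. -/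
open Finset

variable {V : Type*} [Fintype V] [DecidableEq V]

private lemma citers_eq_biUnion (A : Finset (V × V)) (P : Finset V) :
    citers A P = P.biUnion fun v => Finset.univ.filter fun u => (u, v) ∈ A := by
  ext u
  simp [citers, Finset.mem_biUnion]

private lemma ucites_singleton (A : Finset (V × V)) (v : V) :
    ucites A {v} = indeg A v := by
  unfold ucites indeg
  congr 1
  ext u
  simp [citers]

private lemma ucites_le_sum (A : Finset (V × V)) (P : Finset V) :
    ucites A P ≤ ∑ v ∈ P, indeg A v := by
  rw [ucites, citers_eq_biUnion]
  exact Finset.card_biUnion_le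

/-- the independent-set reduction for cautious manipulation under `ucites`.
`H` is a graph on the `n`-element vertex set `Wlt`, `1 < ℓ < n`, `h = ℓ·n`,
`W = Wlt ∪ Wge` with `|Wge| = h − 1`; all arcs come from external articles; every
article of `Wge` has exactly `h` citations, every article of `Wlt` exactly `n`; each
external article cites at most two own articles, two only if they are adjacent in `H`
(the edge article `e_{u,v}` citing exactly `u` and `v`), and each edge of `H` has
exactly one such common citing article. Then `H` has an independent set of size `ℓ` iff
there is a partition of `W` with at most `ℓ − 1` merges and H-index at least `h = ℓ·n`
w.r.t. `ucites`. -/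
theorem stmt16 (A : Finset (V × V)) (H : SimpleGraph V)
    (Wlt Wge : Finset V) (n ℓ : ℕ)
    (hn : n = Wlt.card) (hℓ1 : 1 < ℓ) (hℓn : ℓ < n)
    (hdisj : Disjoint Wlt Wge) (hge : Wge.card = ℓ * n - 1)
    (hHlt : ∀ a b : V, H.Adj a b → a ∈ Wlt ∧ b ∈ Wlt)
    (harcs : ∀ a ∈ A, a.1 ∉ Wlt ∪ Wge ∧ a.2 ∈ Wlt ∪ Wge)
    (hindegge : ∀ w ∈ Wge, indeg A w = ℓ * n)
    (hindeglt : ∀ w ∈ Wlt, indeg A w = n)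
    (houtdeg : ∀ u : V, u ∉ Wlt ∪ Wge →
      (Finset.univ.filter fun v => (u, v) ∈ A).card ≤ 2)
    (hadj : ∀ u : V, u ∉ Wlt ∪ Wge →
      ∀ a b : V, (u, a) ∈ A → (u, b) ∈ A → a ≠ b → H.Adj a b)
    (hedge : ∀ a b : V, H.Adj a b → ∃! u : V, (u, a) ∈ A ∧ (u, b) ∈ A) :
    (∃ S : Finset V, S ⊆ Wlt ∧ S.card = ℓ ∧
        ∀ a ∈ S, ∀ b ∈ S, a ≠ b → ¬ H.Adj a b) ↔
      (∃ 𝒬, IsPartition (Wlt ∪ Wge) 𝒬 ∧ (∑ P ∈ 𝒬, (P.card - 1)) ≤ ℓ - 1 ∧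
        ℓ * n ≤ hindex 𝒬 (ucites A)) := by
  have hnpos : 0 < n := by omega
  have hln2 : 2 ≤ ℓ * n := by
    have h1 : ℓ * 1 ≤ ℓ * n := Nat.mul_le_mul_left ℓ hnpos
    omega
  have hnln : n ≤ ℓ * n := Nat.le_mul_of_pos_left n (by omega)
  have hW : (Wlt ∪ Wge).card = n + (ℓ * n - 1) := by
    rw [Finset.card_union_of_disjoint hdisj, hge, hn]
  constructor
  · rintro ⟨S, hSlt, hScard, hSind⟩
    have hSW : S ⊆ Wlt ∪ Wge := hSlt.trans Finset.subset_union_left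
    set 𝒬 : Finset (Finset V) :=
      insert S (((Wlt ∪ Wge) \ S).image fun v => ({v} : Finset V)) with h𝒬
    have hsingle_inj : Function.Injective fun v : V => ({v} : Finset V) :=
      fun a b h => Finset.singleton_injective h
    have hSnotimg : S ∉ ((Wlt ∪ Wge) \ S).image fun v => ({v} : Finset V) := by
      intro h
      obtain ⟨v, hv, hveq⟩ := Finset.mem_image.1 h
      have : S.card = 1 := by rw [← hveq]; exact Finset.card_singleton v
      omega
    refine ⟨𝒬, ⟨?_, ?_, ?_⟩, ?_, ?_⟩
    · intro P hP
      rcases Finset.mem_insert.1 hP with rfl | hP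
      · exact Finset.card_pos.1 (by omega)
      · obtain ⟨v, _, rfl⟩ := Finset.mem_image.1 hP
        exact Finset.singleton_nonempty v
    · intro P hP
      rcases Finset.mem_insert.1 hP with rfl | hP
      · exact hSW
      · obtain ⟨v, hv, rfl⟩ := Finset.mem_image.1 hP
        exact Finset.singleton_subset_iff.2 (Finset.mem_sdiff.1 hv).1
    · intro v hv
      by_cases hvS : v ∈ S
      · refine ⟨S, ⟨Finset.mem_insert_self _ _, hvS⟩, ?_⟩
        rintro P ⟨hP, hvP⟩
        rcases Finset.mem_insert.1 hP with rfl | hP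
        · rfl
        · obtain ⟨w, hw, rfl⟩ := Finset.mem_image.1 hP
          obtain rfl := Finset.mem_singleton.1 hvP
          exact absurd hvS (Finset.mem_sdiff.1 hw).2
      · refine ⟨{v}, ⟨?_, Finset.mem_singleton_self v⟩, ?_⟩
        · exact Finset.mem_insert_of_mem
            (Finset.mem_image_of_mem _ (Finset.mem_sdiff.2 ⟨hv, hvS⟩))
        · rintro P ⟨hP, hvP⟩
          rcases Finset.mem_insert.1 hP with rfl | hP
          · exact absurd hvP hvS
          · obtain ⟨w, hw, rfl⟩ := Finset.mem_image.1 hP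
            obtain rfl := Finset.mem_singleton.1 hvP
            rfl
    · rw [Finset.sum_insert hSnotimg, hScard]
      have hz : ∑ P ∈ ((Wlt ∪ Wge) \ S).image (fun v => ({v} : Finset V)),
          (P.card - 1) = 0 := by
        apply Finset.sum_eq_zero
        intro P hP
        obtain ⟨w, _, rfl⟩ := Finset.mem_image.1 hP
        simp
      omega
    · have hcard𝒬 : 𝒬.card = ((Wlt ∪ Wge) \ S).card + 1 := by
        rw [h𝒬, Finset.card_insert_of_notMem hSnotimg,
          Finset.card_image_of_injective _ hsingle_inj]
      have hsd : ((Wlt ∪ Wge) \ S).card = n + (ℓ * n - 1) - ℓ := by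
        rw [Finset.card_sdiff_of_subset hSW, hW, hScard]
      have hucS : ucites A S = ℓ * n := by
        rw [ucites, citers_eq_biUnion, Finset.card_biUnion]
        · calc ∑ v ∈ S, (Finset.univ.filter fun u => (u, v) ∈ A).card
              = ∑ v ∈ S, n := Finset.sum_congr rfl fun v hv => hindeglt v (hSlt hv)
            _ = ℓ * n := by rw [Finset.sum_const, hScard, smul_eq_mul]
        · intro a ha b hb hab
          rw [Function.onFun, Finset.disjoint_left]
          intro u hua hub
          have h1 : (u, a) ∈ A := (Finset.mem_filter.1 hua).2
          have h2 : (u, b) ∈ A := (Finset.mem_filter.1 hub).2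
          have hu : u ∉ Wlt ∪ Wge := (harcs _ h1).1
          exact hSind a ha b hb hab (hadj u hu a b h1 h2 hab)
      have hsub : insert S (Wge.image fun v => ({v} : Finset V)) ⊆
          𝒬.filter fun P => ℓ * n ≤ ucites A P := by
        intro P hP
        rcases Finset.mem_insert.1 hP with rfl | hP
        · exact Finset.mem_filter.2 ⟨Finset.mem_insert_self _ _, le_of_eq hucS.symm⟩
        · obtain ⟨w, hw, rfl⟩ := Finset.mem_image.1 hP
          have hwS : w ∉ S := fun h => Finset.disjoint_left.1 hdisj (hSlt h) hw
          refine Finset.mem_filter.2 ⟨?_, ?_⟩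
          · exact Finset.mem_insert_of_mem (Finset.mem_image_of_mem _
              (Finset.mem_sdiff.2 ⟨Finset.mem_union_right _ hw, hwS⟩))
          · rw [ucites_singleton, hindegge w hw]
      have hSnotimg2 : S ∉ Wge.image fun v => ({v} : Finset V) := by
        intro h
        obtain ⟨v, hv, hveq⟩ := Finset.mem_image.1 h
        have : S.card = 1 := by rw [← hveq]; exact Finset.card_singleton v
        omega
      have hcards : (insert S (Wge.image fun v => ({v} : Finset V))).card = ℓ * n := by
        rw [Finset.card_insert_of_notMem hSnotimg2,
          Finset.card_image_of_injective _ hsingle_inj, hge]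
        omega
      unfold hindex
      refine Nat.le_findGreatest ?_ ?_
      · omega
      · calc ℓ * n = _ := hcards.symm
          _ ≤ _ := Finset.card_le_card hsub
  · rintro ⟨𝒬, ⟨hQne, hQsub, hQuniq⟩, hmerge, hhin⟩
    have hPg : hindex 𝒬 (ucites A) ≤
        (𝒬.filter fun P => hindex 𝒬 (ucites A) ≤ ucites A P).card := by
      have h0 : hindex 𝒬 (ucites A) ≠ 0 := by omega
      exact (Nat.findGreatest_eq_iff.1
        (rfl : Nat.findGreatest (fun h => h ≤ (𝒬.filter fun P => h ≤ ucites A P).card)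
          𝒬.card = hindex 𝒬 (ucites A))).2.1 h0
    have hF : ℓ * n ≤ (𝒬.filter fun P => ℓ * n ≤ ucites A P).card := by
      refine le_trans (le_trans hhin hPg) (Finset.card_le_card ?_)
      intro P hP
      have h := Finset.mem_filter.1 hP
      exact Finset.mem_filter.2 ⟨h.1, le_trans hhin h.2⟩
    set F := 𝒬.filter fun P => ℓ * n ≤ ucites A P with hFdef
    set F1 := F.filter fun P => (P ∩ Wge).Nonempty with hF1def
    have hfiber : ∑ P ∈ 𝒬, (P ∩ Wge).card ≤ Wge.card := by
      have h1 : ∀ P : Finset V, (P ∩ Wge).card =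
          ∑ w ∈ Wge, if w ∈ P then 1 else 0 := by
        intro P
        rw [Finset.inter_comm, ← Finset.filter_mem_eq_inter, Finset.card_filter]
      calc ∑ P ∈ 𝒬, (P ∩ Wge).card
          = ∑ P ∈ 𝒬, ∑ w ∈ Wge, (if w ∈ P then 1 else 0) :=
            Finset.sum_congr rfl fun P _ => h1 P
        _ = ∑ w ∈ Wge, ∑ P ∈ 𝒬, (if w ∈ P then 1 else 0) := Finset.sum_comm
        _ = ∑ w ∈ Wge, (𝒬.filter fun P => w ∈ P).card :=
            Finset.sum_congr rfl fun w _ => (Finset.card_filter _ _).symm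
        _ ≤ ∑ w ∈ Wge, 1 := by
            refine Finset.sum_le_sum fun w hw => ?_
            refine Finset.card_le_one.2 fun P hP P' hP' => ?_
            obtain ⟨Q, _, hQu⟩ := hQuniq w (Finset.mem_union_right _ hw)
            rw [hQu P ⟨(Finset.mem_filter.1 hP).1, (Finset.mem_filter.1 hP).2⟩,
                hQu P' ⟨(Finset.mem_filter.1 hP').1, (Finset.mem_filter.1 hP').2⟩]
        _ = Wge.card := by simp
    have hF1card : F1.card ≤ Wge.card := by
      calc F1.card = ∑ P ∈ F1, 1 := by simp
        _ ≤ ∑ P ∈ F1, (P ∩ Wge).card :=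
            Finset.sum_le_sum fun P hP =>
              Finset.card_pos.2 (Finset.mem_filter.1 hP).2
        _ ≤ ∑ P ∈ 𝒬, (P ∩ Wge).card :=
            Finset.sum_le_sum_of_subset
              ((Finset.filter_subset _ _).trans (Finset.filter_subset _ _))
        _ ≤ Wge.card := hfiber
    have hsplit : F1.card + (F.filter fun P => ¬(P ∩ Wge).Nonempty).card = F.card :=
      Finset.card_filter_add_card_filter_not _
    have hne : (F.filter fun P => ¬(P ∩ Wge).Nonempty).Nonempty := by
      rw [← Finset.card_pos]
      omega
    obtain ⟨P0, hP0⟩ := hne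
    have hP0F : P0 ∈ F := (Finset.mem_filter.1 hP0).1
    have hP0Q : P0 ∈ 𝒬 := (Finset.mem_filter.1 hP0F).1
    have hP0uc : ℓ * n ≤ ucites A P0 := (Finset.mem_filter.1 hP0F).2
    have hP0ge : P0 ∩ Wge = ∅ :=
      Finset.not_nonempty_iff_eq_empty.1 (Finset.mem_filter.1 hP0).2
    have hP0lt : P0 ⊆ Wlt := by
      intro v hv
      rcases Finset.mem_union.1 (hQsub P0 hP0Q hv) with h | h
      · exact h
      · exact absurd (Finset.mem_inter.2 ⟨hv, h⟩)
          (by rw [hP0ge]; exact Finset.notMem_empty v)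
    have hsum : ∑ v ∈ P0, indeg A v = P0.card * n := by
      rw [Finset.sum_congr rfl fun v hv => hindeglt v (hP0lt hv),
        Finset.sum_const, smul_eq_mul]
    have hcge : ℓ ≤ P0.card := by
      have h1 := le_trans hP0uc (ucites_le_sum A P0)
      rw [hsum] at h1
      exact Nat.le_of_mul_le_mul_right h1 hnpos
    have hmergeP0 : P0.card - 1 ≤ ℓ - 1 :=
      le_trans (Finset.single_le_sum (f := fun P : Finset V => P.card - 1)
        (fun P _ => Nat.zero_le _) hP0Q) hmerge
    have hcard : P0.card = ℓ := by omega
    refine ⟨P0, hP0lt, hcard, ?_⟩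
    intro a ha b hb hab hAdj
    obtain ⟨u, ⟨hua, hub⟩, -⟩ := hedge a b hAdj
    have hkey : ucites A P0 ≤ ℓ * n - 1 := by
      rw [ucites, citers_eq_biUnion]
      have hbP : P0 = insert b (P0.erase b) := (Finset.insert_erase hb).symm
      rw [hbP, Finset.biUnion_insert]
      set X := (P0.erase b).biUnion (fun v => Finset.univ.filter fun u => (u, v) ∈ A)
        with hX
      set Y : Finset V := Finset.univ.filter (fun u' => (u', b) ∈ A) with hY
      have hcardunion : (Y ∪ X).card = (Y \ X).card + X.card :=
        (Finset.card_sdiff_add_card Y X).symm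
      have huY : u ∈ Y := Finset.mem_filter.2 ⟨Finset.mem_univ u, hub⟩
      have huX : u ∈ X := Finset.mem_biUnion.2
        ⟨a, Finset.mem_erase.2 ⟨hab, ha⟩, Finset.mem_filter.2 ⟨Finset.mem_univ u, hua⟩⟩
      have h1 : (Y \ X).card ≤ n - 1 := by
        have hsubset : Y \ X ⊆ Y.erase u := fun x hx =>
          Finset.mem_erase.2 ⟨fun h => (Finset.mem_sdiff.1 hx).2 (h ▸ huX),
            (Finset.mem_sdiff.1 hx).1⟩
        calc (Y \ X).card ≤ (Y.erase u).card := Finset.card_le_card hsubset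
          _ = Y.card - 1 := Finset.card_erase_of_mem huY
          _ = n - 1 := by
              rw [show Y.card = indeg A b from rfl, hindeglt b (hP0lt hb)]
      have h2 : X.card ≤ (ℓ - 1) * n := by
        calc X.card ≤ ∑ v ∈ P0.erase b, (Finset.univ.filter fun u => (u, v) ∈ A).card :=
              Finset.card_biUnion_le
          _ = ∑ v ∈ P0.erase b, n := Finset.sum_congr rfl fun v hv =>
                hindeglt v (hP0lt (Finset.mem_of_mem_erase hv))
          _ = (P0.erase b).card * n := by rw [Finset.sum_const, smul_eq_mul]
          _ = (ℓ - 1) * n := by rw [Finset.card_erase_of_mem hb, hcard]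
      have hsubm : (ℓ - 1) * n = ℓ * n - n := by rw [Nat.sub_mul, one_mul]
      omega
    omega
end

section
/- Let h ≥ 0 and k ≥ 0, and suppose arbitrary articles of W may be merged. If there exists a partition of W that performs at most k merges and has H-index at least h with respect to scites, then there exists such a partition (at most k merges, H-index at least h with respect to scites) in which every article contained in a non-singleton part has at most h citations, that is, indeg(v) ≤ h for every article v lying in a part of size at least two. -/
open Finset

variable {V : Type*} [Fintype V] [DecidableEq V]

lemma hindex_filter_le {V : Type*} [DecidableEq V] (𝒬 : Finset (Finset V))
    (μ : Finset V → ℕ) :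
    hindex 𝒬 μ ≤ (𝒬.filter fun P => hindex 𝒬 μ ≤ μ P).card :=
  Nat.findGreatest_spec (P := fun h => h ≤ (𝒬.filter fun P => h ≤ μ P).card)
    (Nat.zero_le _) (Nat.zero_le _)

lemma stmt19_aux {V : Type*} [Fintype V] [DecidableEq V]
    (A : Finset (V × V)) (W : Finset V) (h k : ℕ) (n : ℕ) :
    ∀ 𝒬 : Finset (Finset V), IsPartition W 𝒬 → (∑ P ∈ 𝒬, (P.card - 1)) ≤ k →
      h ≤ hindex 𝒬 (scites A) → (∑ P ∈ 𝒬, (P.card - 1)) = n →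
    ∃ 𝒬, IsPartition W 𝒬 ∧ (∑ P ∈ 𝒬, (P.card - 1)) ≤ k ∧
      h ≤ hindex 𝒬 (scites A) ∧
      ∀ P ∈ 𝒬, 2 ≤ P.card → ∀ v ∈ P, indeg A v ≤ h := by
  induction n using Nat.strong_induction_on with
  | _ n IH =>
    intro 𝒬 h1 h2 h3 hn
    by_cases hdone : ∀ P ∈ 𝒬, 2 ≤ P.card → ∀ v ∈ P, indeg A v ≤ h
    · exact ⟨𝒬, h1, h2, h3, hdone⟩
    push_neg at hdone
    obtain ⟨P, hP, hPc, v, hvP, hdeg⟩ := hdone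
    obtain ⟨hne, hsub, hcov⟩ := h1
    -- parts are pairwise "disjoint" in the sense of uniqueness
    have key : ∀ u (Q Q' : Finset V), Q ∈ 𝒬 → Q' ∈ 𝒬 → u ∈ Q → u ∈ Q' → Q = Q' := by
      intro u Q Q' hQ hQ' huQ huQ'
      obtain ⟨R, -, hR⟩ := hcov u (hsub Q hQ huQ)
      rw [hR Q ⟨hQ, huQ⟩, hR Q' ⟨hQ', huQ'⟩]
    set 𝒬' : Finset (Finset V) := insert {v} (insert (P.erase v) (𝒬.erase P)) with h𝒬'
    have hvnotinerase : v ∉ P.erase v := notMem_erase _ _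
    have hvW : v ∈ W := hsub P hP hvP
    -- {v} is not one of the other parts
    have hsing_notmem : ({v} : Finset V) ∉ insert (P.erase v) (𝒬.erase P) := by
      intro hmem
      rcases Finset.mem_insert.1 hmem with heq | hmem
      · exact hvnotinerase (heq ▸ Finset.mem_singleton_self v)
      · obtain ⟨hne', hmem'⟩ := Finset.mem_erase.1 hmem
        exact hne' (key v {v} P hmem' hP (Finset.mem_singleton_self v) hvP)
    have herase_ne : (P.erase v).Nonempty := by
      rw [← Finset.card_pos, Finset.card_erase_of_mem hvP]; omega
    have herase_notmem : P.erase v ∉ 𝒬.erase P := by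
      intro hmem
      obtain ⟨hne', hmem'⟩ := Finset.mem_erase.1 hmem
      obtain ⟨w, hw⟩ := herase_ne
      have heq := key w (P.erase v) P hmem' hP hw (Finset.mem_of_mem_erase hw)
      rw [← heq] at hvP
      exact hvnotinerase hvP
    -- sum of merges decreases
    have hsum' : (∑ Q ∈ 𝒬', (Q.card - 1)) = (P.card - 2) + ∑ Q ∈ 𝒬.erase P, (Q.card - 1) := by
      rw [h𝒬', Finset.sum_insert hsing_notmem, Finset.sum_insert herase_notmem,
        Finset.card_singleton, Finset.card_erase_of_mem hvP]
      omega
    have hsumold : (∑ Q ∈ 𝒬, (Q.card - 1)) = (P.card - 1) + ∑ Q ∈ 𝒬.erase P, (Q.card - 1) := by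
      rw [add_comm, Finset.sum_erase_add _ _ hP]
    have hlt : (∑ Q ∈ 𝒬', (Q.card - 1)) < n := by omega
    -- 𝒬' is a partition
    have hpart' : IsPartition W 𝒬' := by
      refine ⟨?_, ?_, ?_⟩
      · intro Q hQ
        rcases Finset.mem_insert.1 hQ with rfl | hQ
        · exact Finset.singleton_nonempty v
        rcases Finset.mem_insert.1 hQ with rfl | hQ
        · exact herase_ne
        · exact hne Q (Finset.mem_of_mem_erase hQ)
      · intro Q hQ
        rcases Finset.mem_insert.1 hQ with rfl | hQ
        · exact Finset.singleton_subset_iff.2 hvW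
        rcases Finset.mem_insert.1 hQ with rfl | hQ
        · exact (Finset.erase_subset _ _).trans (hsub P hP)
        · exact hsub Q (Finset.mem_of_mem_erase hQ)
      · intro u huW
        obtain ⟨Q, ⟨hQ, huQ⟩, hQuniq⟩ := hcov u huW
        by_cases huv : u = v
        · subst huv
          have hQP : Q = P := key u Q P hQ hP huQ hvP
          refine ⟨{u}, ⟨Finset.mem_insert_self _ _, Finset.mem_singleton_self u⟩, ?_⟩
          rintro R ⟨hR, huR⟩
          rcases Finset.mem_insert.1 hR with rfl | hR
          · rfl
          rcases Finset.mem_insert.1 hR with rfl | hR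
          · exact absurd huR hvnotinerase
          · obtain ⟨hne', hR'⟩ := Finset.mem_erase.1 hR
            exact absurd (key u R P hR' hP huR hvP) hne'
        by_cases hQP : Q = P
        · subst hQP
          refine ⟨Q.erase v, ⟨Finset.mem_insert_of_mem (Finset.mem_insert_self _ _),
            Finset.mem_erase.2 ⟨huv, huQ⟩⟩, ?_⟩
          rintro R ⟨hR, huR⟩
          rcases Finset.mem_insert.1 hR with rfl | hR
          · exact absurd (Finset.mem_singleton.1 huR) huv
          rcases Finset.mem_insert.1 hR with rfl | hR
          · rfl
          · obtain ⟨hne', hR'⟩ := Finset.mem_erase.1 hR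
            exact absurd (key u R Q hR' hQ huR huQ) hne'
        · refine ⟨Q, ⟨Finset.mem_insert_of_mem (Finset.mem_insert_of_mem
            (Finset.mem_erase.2 ⟨hQP, hQ⟩)), huQ⟩, ?_⟩
          rintro R ⟨hR, huR⟩
          rcases Finset.mem_insert.1 hR with rfl | hR
          · exact absurd (Finset.mem_singleton.1 huR) huv
          rcases Finset.mem_insert.1 hR with rfl | hR
          · have huP : u ∈ P := Finset.mem_of_mem_erase huR
            exact absurd (key u Q P hQ hP huQ huP) hQP
          · obtain ⟨-, hR'⟩ := Finset.mem_erase.1 hR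
            exact (key u R Q hR' hQ huR huQ)
    -- H-index stays at least h
    have hhind' : h ≤ hindex 𝒬' (scites A) := by
      have hspec := hindex_filter_le 𝒬 (scites A)
      have hmono : (𝒬.filter fun Q => hindex 𝒬 (scites A) ≤ scites A Q) ⊆
          𝒬.filter fun Q => h ≤ scites A Q := by
        intro Q hQ
        simp only [Finset.mem_filter] at hQ ⊢
        exact ⟨hQ.1, le_trans h3 hQ.2⟩
      have hold : h ≤ (𝒬.filter fun Q => h ≤ scites A Q).card :=
        le_trans h3 (le_trans hspec (Finset.card_le_card hmono))
      have hsv : h ≤ scites A {v} := by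
        rw [scites, Finset.sum_singleton]; omega
      have hinj : ∀ Q ∈ (𝒬.filter fun Q => h ≤ scites A Q),
          (if Q = P then ({v} : Finset V) else Q) ∈ 𝒬'.filter fun Q => h ≤ scites A Q := by
        intro Q hQ
        obtain ⟨hQ𝒬, hQs⟩ := Finset.mem_filter.1 hQ
        by_cases hQP : Q = P
        · simp only [hQP, if_pos rfl]
          exact Finset.mem_filter.2 ⟨Finset.mem_insert_self _ _, hsv⟩
        · simp only [if_neg hQP]
          exact Finset.mem_filter.2 ⟨Finset.mem_insert_of_mem (Finset.mem_insert_of_mem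
            (Finset.mem_erase.2 ⟨hQP, hQ𝒬⟩)), hQs⟩
      have hinj2 : Set.InjOn (fun Q => if Q = P then ({v} : Finset V) else Q)
          (𝒬.filter fun Q => h ≤ scites A Q) := by
        intro Q1 hQ1 Q2 hQ2 heq
        have hQ1𝒬 : Q1 ∈ 𝒬 := (Finset.mem_filter.1 (Finset.mem_coe.1 hQ1)).1
        have hQ2𝒬 : Q2 ∈ 𝒬 := (Finset.mem_filter.1 (Finset.mem_coe.1 hQ2)).1
        simp only at heq
        by_cases h1P : Q1 = P <;> by_cases h2P : Q2 = P
        · rw [h1P, h2P]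
        · rw [if_pos h1P, if_neg h2P] at heq
          exact absurd (key v Q2 P hQ2𝒬 hP (heq ▸ Finset.mem_singleton_self v) hvP) h2P
        · rw [if_neg h1P, if_pos h2P] at heq
          exact absurd (key v Q1 P hQ1𝒬 hP (heq.symm ▸ Finset.mem_singleton_self v) hvP) h1P
        · rwa [if_neg h1P, if_neg h2P] at heq
      have hcardle : (𝒬.filter fun Q => h ≤ scites A Q).card ≤
          (𝒬'.filter fun Q => h ≤ scites A Q).card :=
        Finset.card_le_card_of_injOn _ hinj hinj2
      have hnew : h ≤ (𝒬'.filter fun Q => h ≤ scites A Q).card := le_trans hold hcardle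
      exact Nat.le_findGreatest
        (le_trans hnew (Finset.card_le_card (Finset.filter_subset _ _))) hnew
    exact IH _ hlt 𝒬' hpart' (by omega) hhind' rfl

/-- if some partition of `W` with at most `k` merges has H-index at least
`h` w.r.t. `scites`, then there is such a partition in which every article lying in a
part of size at least two has at most `h` citations. -/
theorem stmt19 (A : Finset (V × V)) (W : Finset V) (h k : ℕ)
    (hex : ∃ 𝒬, IsPartition W 𝒬 ∧ (∑ P ∈ 𝒬, (P.card - 1)) ≤ k ∧
      h ≤ hindex 𝒬 (scites A)) :
    ∃ 𝒬, IsPartition W 𝒬 ∧ (∑ P ∈ 𝒬, (P.card - 1)) ≤ k ∧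
      h ≤ hindex 𝒬 (scites A) ∧
      ∀ P ∈ 𝒬, 2 ≤ P.card → ∀ v ∈ P, indeg A v ≤ h := by
  obtain ⟨𝒬, h1, h2, h3⟩ := hex
  exact stmt19_aux A W h k _ 𝒬 h1 h2 h3 rfl
end
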